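/- arXiv:2601.11347 — 10 statements merged into one kernel-verified Lean document; each statement's English description precedes it below -/
import Mathlib

section
/- If f : [a,b] → ℝ is Borel measurable and non-decreasing, then its c-envelope f^c(x) = inf { E_Q[f] : Q a Borel probability measure on [a,b] with mean x and f Q-integrable } is also non-decreasing in x. -/
open MeasureTheory Set

/-- The c-envelope of `f` on `[a,b]`: infimum of `∫ f dQ` over Borel probability
measures `Q` supported in `[a,b]` with mean `x` under which `f` is integrable. -/
noncomputable def cEnv (a b : ℝ) (f : ℝ → ℝ) (x : ℝ) : EReal :=
  sInf {y : EReal | ∃ Q : Measure ℝ, IsProbabilityMeasure Q ∧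
    Q (Icc a b)ᶜ = 0 ∧ Integrable f Q ∧ (∫ t, t ∂Q) = x ∧
    y = ((∫ t, f t ∂Q : ℝ) : EReal)}

/-!
Pushing a measure `Q` on `[a,b]` forward along the contraction `t ↦ a + l (t - a)`,
`0 ≤ l ≤ 1`, keeps it on `[a,b]`, moves its mean from `y` to `a + l (y - a)`, and moves every
point to the left, so it can only decrease `∫ f dQ` when `f` is non-decreasing on `[a,b]`.
Every `x ∈ [a, y]` is such a mean, so each competitor for `f^c(y)` yields a competitor for
`f^c(x)` with no larger value.
-/

section Contraction

variable {a b l : ℝ}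

lemma mapsTo_contraction_Icc (hl₀ : 0 ≤ l) (hl₁ : l ≤ 1) :
    MapsTo (fun t => a + l * (t - a)) (Icc a b) (Icc a b) := fun t ht => by
  constructor <;> nlinarith [ht.1, ht.2]

lemma MonotoneOn.comp_contraction_mem_Icc {f : ℝ → ℝ} (hmono : MonotoneOn f (Icc a b))
    (hl₀ : 0 ≤ l) (hl₁ : l ≤ 1) {t : ℝ} (ht : t ∈ Icc a b) :
    f (a + l * (t - a)) ∈ Icc (f a) (f t) := by
  have hT := mapsTo_contraction_Icc hl₀ hl₁ ht
  exact ⟨hmono ⟨le_rfl, ht.1.trans ht.2⟩ hT hT.1, hmono hT ht (by nlinarith [ht.1])⟩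

variable {Q : Measure ℝ} {f : ℝ → ℝ}

lemma integral_id_map_contraction [IsProbabilityMeasure Q] (hQ : Integrable (fun t => t) Q) :
    ∫ t, t ∂Q.map (fun t => a + l * (t - a)) = a + l * ((∫ t, t ∂Q) - a) := by
  have haffine : Integrable (fun t => l * (t - a)) Q := (hQ.sub (integrable_const a)).const_mul l
  rw [integral_map (by fun_prop) measurable_id'.aestronglyMeasurable,
    integral_add (integrable_const a) haffine, integral_const_mul,
    integral_sub hQ (integrable_const a)]
  simp

lemma map_contraction_compl_Icc (hl₀ : 0 ≤ l) (hl₁ : l ≤ 1) (hQ : Q (Icc a b)ᶜ = 0) :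
    Q.map (fun t => a + l * (t - a)) (Icc a b)ᶜ = 0 := by
  rw [Measure.map_apply (by fun_prop) measurableSet_Icc.compl]
  exact measure_mono_null (fun t ht htab => ht (mapsTo_contraction_Icc hl₀ hl₁ htab)) hQ

lemma cEnv_contraction_le_integral [IsProbabilityMeasure Q] (hl₀ : 0 ≤ l) (hl₁ : l ≤ 1)
    (hf : Measurable f) (hmono : MonotoneOn f (Icc a b)) (hQ : Q (Icc a b)ᶜ = 0)
    (hfQ : Integrable f Q) :
    cEnv a b f (a + l * ((∫ t, t ∂Q) - a)) ≤ ∫ t, f t ∂Q := by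
  have hQ_ae : ∀ᵐ t ∂Q, t ∈ Icc a b := ae_iff.2 hQ
  have hT : Measurable fun t => a + l * (t - a) := by fun_prop
  have hbounds : ∀ᵐ t ∂Q, f (a + l * (t - a)) ∈ Icc (f a) (f t) := by
    filter_upwards [hQ_ae] with t ht using hmono.comp_contraction_mem_Icc hl₀ hl₁ ht
  have hfT : Integrable (fun t => f (a + l * (t - a))) Q :=
    integrable_of_le_of_le (hf.comp hT).aestronglyMeasurable
      (hbounds.mono fun _ h => h.1) (hbounds.mono fun _ h => h.2) (integrable_const (f a)) hfQ
  refine sInf_le_of_le ⟨Q.map _, Measure.isProbabilityMeasure_map hT.aemeasurable,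
    map_contraction_compl_Icc hl₀ hl₁ hQ,
    (integrable_map_measure hf.aestronglyMeasurable hT.aemeasurable).2 hfT,
    integral_id_map_contraction (Integrable.of_mem_Icc a b aemeasurable_id' hQ_ae), rfl⟩ ?_
  rw [integral_map hT.aemeasurable hf.aestronglyMeasurable, EReal.coe_le_coe_iff]
  exact integral_mono_ae hfT hfQ (hbounds.mono fun _ h => h.2)

end Contraction

theorem stmt1_general (a b : ℝ) (f : ℝ → ℝ) (hf : Measurable f)
    (hmono : MonotoneOn f (Icc a b)) :
    MonotoneOn (cEnv a b f) (Icc a b) := by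
  intro x hx y _ hxy
  obtain ⟨l, ⟨hl₀, hl₁⟩, rfl⟩ : x ∈ (fun l : ℝ => a + l • (y - a)) '' Icc 0 1 := by
    rw [← segment_eq_image', segment_eq_Icc (hx.1.trans hxy)]
    exact ⟨hx.1, hxy⟩
  refine le_sInf ?_
  rintro _ ⟨Q, hQ, hQab, hfQ, rfl, rfl⟩
  exact cEnv_contraction_le_integral hl₀ hl₁ hf hmono hQab hfQ

theorem stmt1 (a b : ℝ) (hab : a < b) (f : ℝ → ℝ) (hf : Measurable f)
    (hmono : MonotoneOn f (Icc a b)) :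
    MonotoneOn (cEnv a b f) (Icc a b) :=
  stmt1_general a b f hf hmono
end

section
/- For any Borel measurable f : [a,b] → ℝ and any x ∈ [a,b], the c-envelope satisfies f^c(x) = inf over pairs x₁ ≤ x ≤ x₂ in [a,b] of ((x₂-x)/(x₂-x₁)) f(x₁) + ((x-x₁)/(x₂-x₁)) f(x₂) (with the convention 0/0 = 1); that is, the infimum of E_Q[f] over probability measures with mean x equals the infimum over measures supported on at most two points with mean x. -/
open MeasureTheory Set

section TwoPointMeasure

noncomputable def twoPointMeasure (p q u v : ℝ) : Measure ℝ :=
  ENNReal.ofReal p • Measure.dirac u + ENNReal.ofReal q • Measure.dirac v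

variable {p q u v : ℝ}

lemma integrable_twoPointMeasure (g : ℝ → ℝ) : Integrable g (twoPointMeasure p q u v) :=
  ((integrable_dirac enorm_lt_top).smul_measure ENNReal.ofReal_ne_top).add_measure
    ((integrable_dirac enorm_lt_top).smul_measure ENNReal.ofReal_ne_top)

lemma integral_twoPointMeasure (hp : 0 ≤ p) (hq : 0 ≤ q) (g : ℝ → ℝ) :
    ∫ t, g t ∂(twoPointMeasure p q u v) = p * g u + q * g v := by
  rw [twoPointMeasure, integral_add_measure
      ((integrable_dirac enorm_lt_top).smul_measure ENNReal.ofReal_ne_top)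
      ((integrable_dirac enorm_lt_top).smul_measure ENNReal.ofReal_ne_top),
    integral_smul_measure, integral_smul_measure, integral_dirac, integral_dirac,
    ENNReal.toReal_ofReal hp, ENNReal.toReal_ofReal hq, smul_eq_mul, smul_eq_mul]

lemma isProbabilityMeasure_twoPointMeasure (hp : 0 ≤ p) (hq : 0 ≤ q) (hpq : p + q = 1) :
    IsProbabilityMeasure (twoPointMeasure p q u v) := by
  constructor
  simp [twoPointMeasure, ← ENNReal.ofReal_add hp hq, hpq]

lemma twoPointMeasure_compl_eq_zero {s : Set ℝ} (hs : MeasurableSet s) (hu : u ∈ s)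
    (hv : v ∈ s) : twoPointMeasure p q u v sᶜ = 0 := by
  simp [twoPointMeasure, Measure.dirac_apply' _ hs.compl, hu, hv]

end TwoPointMeasure

lemma integral_eq_apply_of_ae_eq {Q : Measure ℝ} [IsProbabilityMeasure Q] {c : ℝ}
    (h : (fun t => t) =ᵐ[Q] fun _ => c) (g : ℝ → ℝ) : ∫ t, g t ∂Q = g c := by
  rw [integral_congr_ae (h.mono fun _ ht => congrArg g ht), integral_const, probReal_univ,
    one_smul]

lemma exists_affine_le_of_chord {s : Set ℝ} {g : ℝ → ℝ} {x r : ℝ} (hx : r ≤ g x)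
    (hchord : ∀ u ∈ s, ∀ v ∈ s, u < x → x < v → r * (v - u) ≤ (v - x) * g u + (x - u) * g v)
    (hleft : ∃ u ∈ s, u < x) (hright : ∃ v ∈ s, x < v) :
    ∃ c, ∀ t ∈ s, r + c * (t - x) ≤ g t := by
  set T := (fun v => (g v - r) / (v - x)) '' {v ∈ s | x < v}
  have hlower : ∀ u ∈ s, u < x → (r - g u) / (x - u) ∈ lowerBounds T := by
    rintro u hu hux _ ⟨v, ⟨hv, hxv⟩, rfl⟩
    rw [div_le_div_iff₀ (by linarith) (by linarith)]
    nlinarith [hchord u hu v hv hux hxv]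
  have hT : T.Nonempty := let ⟨v, hv, hxv⟩ := hright; ⟨_, v, ⟨hv, hxv⟩, rfl⟩
  have hT_bdd : BddBelow T := let ⟨u, hu, hux⟩ := hleft; ⟨_, hlower u hu hux⟩
  refine ⟨sInf T, fun t ht => ?_⟩
  rcases lt_trichotomy t x with htx | rfl | hxt
  · have := le_csInf hT (hlower t ht htx)
    rw [div_le_iff₀ (by linarith)] at this
    nlinarith
  · simpa using hx
  · have := csInf_le hT_bdd ⟨t, ⟨ht, hxt⟩, rfl⟩
    rw [le_div_iff₀ (by linarith)] at this
    linarith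

lemma le_integral_of_affine_le {Q : Measure ℝ} [IsProbabilityMeasure Q] {g : ℝ → ℝ} {x r c : ℝ}
    (hid : Integrable (fun t => t) Q) (hg : Integrable g Q) (hmean : ∫ t, t ∂Q = x)
    (hle : ∀ᵐ t ∂Q, r + c * (t - x) ≤ g t) : r ≤ ∫ t, g t ∂Q := by
  have hcentered : Integrable (fun t => c * (t - x)) Q := (hid.sub (integrable_const _)).const_mul c
  calc r = ∫ t, r + c * (t - x) ∂Q := by
        rw [integral_add (integrable_const r) hcentered, integral_const_mul,
          integral_sub hid (integrable_const _)]
        simp [hmean]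
    _ ≤ ∫ t, g t ∂Q := integral_mono_ae ((integrable_const r).add hcentered) hg hle

noncomputable def chordEnv (a b : ℝ) (f : ℝ → ℝ) (x : ℝ) : EReal :=
  sInf {y : EReal | ∃ x₁ x₂ : ℝ, a ≤ x₁ ∧ x₁ ≤ x ∧ x ≤ x₂ ∧ x₂ ≤ b ∧
        ((x₁ = x₂ ∧ y = ((f x : ℝ) : EReal)) ∨
         (x₁ < x₂ ∧ y = ((((x₂ - x) / (x₂ - x₁)) * f x₁ +
            ((x - x₁) / (x₂ - x₁)) * f x₂ : ℝ) : EReal)))}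

section Envelopes

variable {a b x : ℝ} {f : ℝ → ℝ}

lemma cEnv_le_twoPoint {p q u v : ℝ} (hu : u ∈ Icc a b) (hv : v ∈ Icc a b) (hp : 0 ≤ p)
    (hq : 0 ≤ q) (hpq : p + q = 1) (hmean : p * u + q * v = x) :
    cEnv a b f x ≤ ((p * f u + q * f v : ℝ) : EReal) := by
  refine sInf_le ⟨twoPointMeasure p q u v, isProbabilityMeasure_twoPointMeasure hp hq hpq,
    twoPointMeasure_compl_eq_zero measurableSet_Icc hu hv, integrable_twoPointMeasure f, ?_, ?_⟩
  · rw [integral_twoPointMeasure hp hq (fun t => t), hmean]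
  · rw [integral_twoPointMeasure hp hq]

lemma cEnv_le_chordEnv : cEnv a b f x ≤ chordEnv a b f x := by
  refine le_sInf ?_
  rintro y ⟨u, v, hau, hux, hxv, hvb, ⟨rfl, rfl⟩ | ⟨huv, rfl⟩⟩
  · obtain rfl : x = u := le_antisymm hxv hux
    simpa using cEnv_le_twoPoint (f := f) (p := 1) (q := 0) ⟨hau, hvb⟩ ⟨hau, hvb⟩ zero_le_one
      le_rfl (add_zero 1) (by ring)
  · have hvu : 0 < v - u := sub_pos.2 huv
    refine cEnv_le_twoPoint ⟨hau, hux.trans (hxv.trans hvb)⟩ ⟨(hau.trans hux).trans hxv, hvb⟩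
      (div_nonneg (sub_nonneg.2 hxv) hvu.le) (div_nonneg (sub_nonneg.2 hux) hvu.le) ?_ ?_
    · field_simp; ring
    · field_simp; ring

lemma chordEnv_le_apply (hx : x ∈ Icc a b) : chordEnv a b f x ≤ f x :=
  sInf_le ⟨x, x, hx.1, le_rfl, le_rfl, hx.2, .inl ⟨rfl, rfl⟩⟩

lemma mul_sub_le_of_le_chordEnv {r u v : ℝ} (hr : (r : EReal) ≤ chordEnv a b f x)
    (hau : a ≤ u) (hux : u < x) (hxv : x < v) (hvb : v ≤ b) :
    r * (v - u) ≤ (v - x) * f u + (x - u) * f v := by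
  have hvu : 0 < v - u := by linarith
  have hchord := hr.trans <| sInf_le ⟨u, v, hau, hux.le, hxv.le, hvb, .inr ⟨hux.trans hxv, rfl⟩⟩
  rw [EReal.coe_le_coe_iff, div_mul_eq_mul_div, div_mul_eq_mul_div, ← add_div,
    le_div_iff₀ hvu] at hchord
  exact hchord

lemma chordEnv_le_integral (hx : x ∈ Icc a b) {Q : Measure ℝ} [IsProbabilityMeasure Q]
    (hsupp : Q (Icc a b)ᶜ = 0) (hf : Integrable f Q) (hmean : ∫ t, t ∂Q = x) :
    chordEnv a b f x ≤ ((∫ t, f t ∂Q : ℝ) : EReal) := by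
  have hmem : ∀ᵐ t ∂Q, t ∈ Icc a b := mem_ae_iff.2 hsupp
  have hid : Integrable (fun t => t) Q := .of_mem_Icc a b aemeasurable_id hmem
  rcases hx.1.eq_or_lt with rfl | hax
  · have hdirac := (integral_eq_iff_of_ae_le (integrable_const _) hid
      (hmem.mono fun _ ht => ht.1)).1 (by simp [hmean])
    rw [integral_eq_apply_of_ae_eq hdirac.symm]
    exact chordEnv_le_apply hx
  rcases hx.2.eq_or_lt with rfl | hxb
  · have hdirac := (integral_eq_iff_of_ae_le hid (integrable_const _)
      (hmem.mono fun _ ht => ht.2)).1 (by simp [hmean])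
    rw [integral_eq_apply_of_ae_eq hdirac]
    exact chordEnv_le_apply hx
  have hfx := chordEnv_le_apply (f := f) hx
  by_cases hbot : chordEnv a b f x = ⊥
  · exact hbot ▸ bot_le
  obtain ⟨r, hr⟩ : ∃ r : ℝ, (r : EReal) = chordEnv a b f x :=
    ⟨_, EReal.coe_toReal (hfx.trans_lt (EReal.coe_lt_top _)).ne hbot⟩
  rw [← hr, EReal.coe_le_coe_iff] at hfx ⊢
  obtain ⟨c, hc⟩ := exists_affine_le_of_chord hfx
    (fun u hu v hv hux hxv => mul_sub_le_of_le_chordEnv hr.le hu.1 hux hxv hv.2)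
    ⟨a, left_mem_Icc.2 (hax.trans hxb).le, hax⟩ ⟨b, right_mem_Icc.2 (hax.trans hxb).le, hxb⟩
  exact le_integral_of_affine_le hid hf hmean (hmem.mono hc)

end Envelopes

theorem stmt4_general (a b : ℝ) (f : ℝ → ℝ)
    (x : ℝ) (hx : x ∈ Icc a b) :
    cEnv a b f x =
      sInf {y : EReal | ∃ x₁ x₂ : ℝ, a ≤ x₁ ∧ x₁ ≤ x ∧ x ≤ x₂ ∧ x₂ ≤ b ∧
        ((x₁ = x₂ ∧ y = ((f x : ℝ) : EReal)) ∨
         (x₁ < x₂ ∧ y = ((((x₂ - x) / (x₂ - x₁)) * f x₁ +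
            ((x - x₁) / (x₂ - x₁)) * f x₂ : ℝ) : EReal)))} :=
  cEnv_le_chordEnv.antisymm <| le_sInf fun _ ⟨_, _, hsupp, hf, hmean, hy⟩ =>
    hy ▸ chordEnv_le_integral hx hsupp hf hmean

theorem stmt4 (a b : ℝ) (hab : a < b) (f : ℝ → ℝ) (hf : Measurable f)
    (x : ℝ) (hx : x ∈ Icc a b) :
    cEnv a b f x =
      sInf {y : EReal | ∃ x₁ x₂ : ℝ, a ≤ x₁ ∧ x₁ ≤ x ∧ x ≤ x₂ ∧ x₂ ≤ b ∧
        ((x₁ = x₂ ∧ y = ((f x : ℝ) : EReal)) ∨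
         (x₁ < x₂ ∧ y = ((((x₂ - x) / (x₂ - x₁)) * f x₁ +
            ((x - x₁) / (x₂ - x₁)) * f x₂ : ℝ) : EReal)))} :=
  stmt4_general a b f x hx
end

section
/- Let E be a nonnegative Borel function on [a,b] with ∫ E dP ≤ 1 for all Borel probability measures P on [a,b] satisfying E_P[X] ≤ μ₀. Then there exists α ∈ [0, 1/(μ₀ - a)] such that E(x) ≤ 1 + α(x - μ₀) for all x ∈ [a,b]. -/
/-! Testing against the two-point laws `t δ_u + (1 - t) δ_v` with mean `μ₀` already forces
`(E x - 1) / (x - μ₀) ≤ (1 - E y) / (μ₀ - y)` whenever `y < μ₀ < x`, so the supremum `α` of the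
left-hand slopes (and of `0`) is a coin-betting slope dominating `E`. Comparing with `y = a`, where
`E a ≥ 0`, gives `α ≤ 1 / (μ₀ - a)`. -/

open MeasureTheory Set

namespace MeasureTheory.Measure

variable {α : Type*} [MeasurableSpace α]

noncomputable def twoPoint (t : ℝ) (x y : α) : Measure α :=
  ENNReal.ofReal t • dirac x + ENNReal.ofReal (1 - t) • dirac y

lemma isProbabilityMeasure_twoPoint {t : ℝ} (ht : t ∈ Icc 0 1) (x y : α) :
    IsProbabilityMeasure (twoPoint t x y) := by
  constructor
  simp only [twoPoint, add_apply, smul_apply, measure_univ, smul_eq_mul, mul_one]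
  rw [← ENNReal.ofReal_add ht.1 (sub_nonneg.2 ht.2), add_sub_cancel, ENNReal.ofReal_one]

lemma integral_twoPoint [MeasurableSingletonClass α] (f : α → ℝ) {t : ℝ} (ht : t ∈ Icc 0 1) (x y : α) :
    ∫ z, f z ∂twoPoint t x y = t * f x + (1 - t) * f y := by
  have hint (z : α) : Integrable f (dirac z) := (integrable_const (f z)).congr (ae_eq_dirac f).symm
  rw [twoPoint, integral_add_measure ((hint x).smul_measure ENNReal.ofReal_ne_top)
    ((hint y).smul_measure ENNReal.ofReal_ne_top), integral_smul_measure, integral_smul_measure,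
    integral_dirac, integral_dirac, ENNReal.toReal_ofReal ht.1,
    ENNReal.toReal_ofReal (sub_nonneg.2 ht.2), smul_eq_mul, smul_eq_mul]

lemma twoPoint_compl_eq_zero {s : Set α} (hs : MeasurableSet s) (t : ℝ) {x y : α}
    (hx : x ∈ s) (hy : y ∈ s) : twoPoint t x y sᶜ = 0 := by
  simp [twoPoint, dirac_apply' _ hs.compl, hx, hy]

end MeasureTheory.Measure

def IsTwoPointEVariable (s : Set ℝ) (μ₀ : ℝ) (E : ℝ → ℝ) : Prop :=
  ∀ u ∈ s, ∀ v ∈ s, ∀ t ∈ Icc (0 : ℝ) 1, t * u + (1 - t) * v ≤ μ₀ → t * E u + (1 - t) * E v ≤ 1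

lemma isTwoPointEVariable_of_forall_integral_le {s : Set ℝ} (hs : MeasurableSet s) {μ₀ : ℝ}
    {E : ℝ → ℝ} (hev : ∀ P : Measure ℝ, IsProbabilityMeasure P → P sᶜ = 0 →
      (∫ x, x ∂P) ≤ μ₀ → (∫ x, E x ∂P) ≤ 1) :
    IsTwoPointEVariable s μ₀ E := by
  intro u hu v hv t ht hmean
  have := hev _ (Measure.isProbabilityMeasure_twoPoint ht u v)
    (Measure.twoPoint_compl_eq_zero hs t hu hv) (by rwa [Measure.integral_twoPoint (fun x => x) ht])
  rwa [Measure.integral_twoPoint E ht] at this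

namespace IsTwoPointEVariable

variable {s : Set ℝ} {μ₀ : ℝ} {E : ℝ → ℝ}

lemma le_one (hE : IsTwoPointEVariable s μ₀ E) {x : ℝ} (hx : x ∈ s) (hxμ : x ≤ μ₀) :
    E x ≤ 1 := by
  simpa using hE x hx x hx 1 (right_mem_Icc.2 zero_le_one) (by simpa using hxμ)

lemma slope_le_slope (hE : IsTwoPointEVariable s μ₀ E) {x y : ℝ} (hx : x ∈ s) (hy : y ∈ s)
    (hyμ : y < μ₀) (hμx : μ₀ < x) :
    (E x - 1) / (x - μ₀) ≤ (1 - E y) / (μ₀ - y) := by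
  have hxy : 0 < x - y := by linarith
  -- the weight `t` for which `t δ_x + (1 - t) δ_y` has mean exactly `μ₀`
  set t := (μ₀ - y) / (x - y)
  have ht : t ∈ Icc 0 1 := ⟨by positivity, (div_le_one hxy).2 (by linarith)⟩
  have hwx : t * (x - y) = μ₀ - y := div_mul_cancel₀ _ hxy.ne'
  have hwy : (1 - t) * (x - y) = x - μ₀ := by linear_combination -hwx
  have hle := hE x hx y hy t ht (by linear_combination hwx)
  rw [div_le_div_iff₀ (by linarith) (by linarith), ← hwx, ← hwy]
  nlinarith [mul_nonneg hxy.le (sub_nonneg.2 hle)]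

lemma exists_coinBetting_le (hE : IsTwoPointEVariable s μ₀ E) {β : ℝ} (hβ : 0 ≤ β)
    (hslope : ∀ x ∈ s, μ₀ < x → (E x - 1) / (x - μ₀) ≤ β) :
    ∃ α : ℝ, 0 ≤ α ∧ α ≤ β ∧ ∀ x ∈ s, E x ≤ 1 + α * (x - μ₀) := by
  set L := insert 0 ((fun x => (E x - 1) / (x - μ₀)) '' {x ∈ s | μ₀ < x})
  have hL : ∀ l ∈ L, l ≤ β := by
    rintro l (rfl | ⟨x, ⟨hx, hμx⟩, rfl⟩)
    exacts [hβ, hslope x hx hμx]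
  have hL_bdd : BddAbove L := ⟨β, hL⟩
  refine ⟨sSup L, le_csSup hL_bdd (mem_insert 0 _), csSup_le (insert_nonempty 0 _) hL,
    fun x hx => ?_⟩
  rcases lt_trichotomy x μ₀ with hxμ | rfl | hμx
  · have hsup : sSup L ≤ (1 - E x) / (μ₀ - x) := by
      refine csSup_le (insert_nonempty 0 _) ?_
      rintro l (rfl | ⟨z, ⟨hz, hμz⟩, rfl⟩)
      · exact div_nonneg (sub_nonneg.2 (hE.le_one hx hxμ.le)) (sub_nonneg.2 hxμ.le)
      · exact hE.slope_le_slope hz hx hxμ hμz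
    rw [le_div_iff₀ (sub_pos.2 hxμ)] at hsup
    linarith
  · simpa using hE.le_one hx le_rfl
  · have hsup := le_csSup hL_bdd (mem_insert_of_mem 0 ⟨x, ⟨hx, hμx⟩, rfl⟩)
    rw [div_le_iff₀ (sub_pos.2 hμx)] at hsup
    linarith

end IsTwoPointEVariable

theorem stmt5_general (a b μ₀ : ℝ) (ha : a < μ₀)
    (E : ℝ → ℝ) (hnn : ∀ x ∈ Icc a b, 0 ≤ E x)
    (hev : ∀ P : Measure ℝ, IsProbabilityMeasure P → P (Icc a b)ᶜ = 0 →
      (∫ x, x ∂P) ≤ μ₀ → (∫ x, E x ∂P) ≤ 1) :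
    ∃ α : ℝ, 0 ≤ α ∧ α ≤ 1 / (μ₀ - a) ∧
      ∀ x ∈ Icc a b, E x ≤ 1 + α * (x - μ₀) := by
  have hE := isTwoPointEVariable_of_forall_integral_le measurableSet_Icc hev
  refine hE.exists_coinBetting_le (one_div_nonneg.2 (sub_nonneg.2 ha.le)) fun x hx hμx => ?_
  have ha_mem : a ∈ Icc a b := ⟨le_rfl, hx.1.trans hx.2⟩
  refine (hE.slope_le_slope hx ha_mem ha hμx).trans ?_
  gcongr
  linarith [hnn a ha_mem]

theorem stmt5 (a b μ₀ : ℝ) (ha : a < μ₀) (hb : μ₀ < b)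
    (E : ℝ → ℝ) (hE : Measurable E) (hnn : ∀ x ∈ Icc a b, 0 ≤ E x)
    (hev : ∀ P : Measure ℝ, IsProbabilityMeasure P → P (Icc a b)ᶜ = 0 →
      (∫ x, x ∂P) ≤ μ₀ → (∫ x, E x ∂P) ≤ 1) :
    ∃ α : ℝ, 0 ≤ α ∧ α ≤ 1 / (μ₀ - a) ∧
      ∀ x ∈ Icc a b, E x ≤ 1 + α * (x - μ₀) :=
  stmt5_general a b μ₀ ha E hnn hev
end

section
/- For a < μ₀ < b and μ₁ ∈ (a,b), the function α ↦ ((b-μ₁)/(b-a)) log(1 + α(a-μ₀)) + ((μ₁-a)/(b-a)) log(1 + α(b-μ₀)) is strictly concave on the interval (1/(μ₀-b), 1/(μ₀-a)) and attains its unique maximum at α* = (μ₁ - μ₀)/((μ₀-a)(b-μ₀)); moreover α* lies in [1/(μ₀-b), 1/(μ₀-a)]. -/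
open Set Real

/-!
At the Kelly bet α* = (μ₁ - μ₀)/((μ₀ - a)(b - μ₀)) the wealth factors are
1 + α*(a - μ₀) = (b - μ₁)/(b - μ₀) and 1 + α*(b - μ₀) = (μ₁ - a)/(μ₀ - a), and for every bet α
keeping wealth positive the ratio (1 + α(X - μ₀))/(1 + α*(X - μ₀)) has mean one under the two-point
law of X with mean μ₁. Jensen's inequality for the strictly concave logarithm then gives
g(α) - g(α*) = E log(ratio) < log E(ratio) = 0 unless the ratio is constant, i.e. unless α = α*.
-/

theorem StrictConcaveOn.const_mul {E : Type*} [AddCommGroup E] [Module ℝ E] {s : Set E}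
    {f : E → ℝ} {c : ℝ} (hc : 0 < c) (hf : StrictConcaveOn ℝ s f) :
    StrictConcaveOn ℝ s fun x => c * f x :=
  ⟨hf.1, fun x hx y hy hxy a b ha hb hab => by
    have := mul_lt_mul_of_pos_left (hf.2 hx hy hxy ha hb hab) hc
    simp only [smul_eq_mul] at this ⊢
    linarith⟩

theorem strictConcaveOn_log_one_add_mul {s : Set ℝ} {d : ℝ} (hs : Convex ℝ s) (hd : d ≠ 0)
    (hpos : ∀ x ∈ s, 0 < 1 + x * d) : StrictConcaveOn ℝ s fun x => log (1 + x * d) := by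
  refine ⟨hs, fun x hx y hy hxy p q hp hq hpq => ?_⟩
  have hne : 1 + x * d ≠ 1 + y * d := by simpa [hd] using hxy
  convert strictConcaveOn_log_Ioi.2 (hpos x hx) (hpos y hy) hne hp hq hpq using 2
  simp only [smul_eq_mul]
  linear_combination (-1 : ℝ) * hpq

theorem mul_log_add_mul_log_lt_of_mean_ratio_eq_one {p q x y x' y' : ℝ} (hp : 0 < p) (hq : 0 < q)
    (hpq : p + q = 1) (hx : 0 < x) (hy : 0 < y) (hx' : 0 < x') (hy' : 0 < y')
    (hmean : p * (x / x') + q * (y / y') = 1) (hne : x ≠ x') :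
    p * log x + q * log y < p * log x' + q * log y' := by
  have hu : x / x' ≠ 1 := by rwa [Ne, div_eq_one_iff_eq hx'.ne']
  have huv : x / x' ≠ y / y' := by
    rintro h
    rw [← h, ← add_mul, hpq, one_mul] at hmean
    exact hu hmean
  have := strictConcaveOn_log_Ioi.2 (div_pos hx hx') (div_pos hy hy') huv hp hq hpq
  simp only [smul_eq_mul, hmean, log_one, log_div hx.ne' hx'.ne', log_div hy.ne' hy'.ne'] at this
  linarith

section CoinBetting

variable {a b μ₀ : ℝ}

theorem one_add_mul_sub_pos (h1 : a < μ₀) (h2 : μ₀ < b) {α x : ℝ}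
    (hα : α ∈ Ioo (1 / (μ₀ - b)) (1 / (μ₀ - a))) (hx : x ∈ Icc a b) : 0 < 1 + α * (x - μ₀) := by
  obtain ⟨hαb, hαa⟩ := hα
  rw [div_lt_iff_of_neg (by linarith)] at hαb
  rw [lt_div_iff₀ (by linarith)] at hαa
  rcases le_total 0 α with hα | hα <;> nlinarith [hx.1, hx.2]

theorem kelly_mem_Ioo (h1 : a < μ₀) (h2 : μ₀ < b) {μ₁ : ℝ} (h3 : a < μ₁) (h4 : μ₁ < b) :
    (μ₁ - μ₀) / ((μ₀ - a) * (b - μ₀)) ∈ Ioo (1 / (μ₀ - b)) (1 / (μ₀ - a)) := by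
  have ha : 0 < μ₀ - a := by linarith
  have hb : 0 < b - μ₀ := by linarith
  have hK : 0 < (μ₀ - a) * (b - μ₀) := mul_pos ha hb
  have hb' : μ₀ - b ≠ 0 := by linarith
  have hlow : (μ₁ - μ₀) / ((μ₀ - a) * (b - μ₀)) - 1 / (μ₀ - b) =
      (μ₁ - a) / ((μ₀ - a) * (b - μ₀)) := by
    field_simp
    ring
  have hup : 1 / (μ₀ - a) - (μ₁ - μ₀) / ((μ₀ - a) * (b - μ₀)) =
      (b - μ₁) / ((μ₀ - a) * (b - μ₀)) := by
    field_simp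
    ring
  constructor
  · linarith [div_pos (sub_pos.2 h3) hK]
  · linarith [div_pos (sub_pos.2 h4) hK]

theorem one_add_kelly_mul_sub_left (h1 : a < μ₀) (h2 : μ₀ < b) (μ₁ : ℝ) :
    1 + (μ₁ - μ₀) / ((μ₀ - a) * (b - μ₀)) * (a - μ₀) = (b - μ₁) / (b - μ₀) := by
  have : μ₀ - a ≠ 0 := by linarith
  have : b - μ₀ ≠ 0 := by linarith
  field_simp
  ring

theorem one_add_kelly_mul_sub_right (h1 : a < μ₀) (h2 : μ₀ < b) (μ₁ : ℝ) :
    1 + (μ₁ - μ₀) / ((μ₀ - a) * (b - μ₀)) * (b - μ₀) = (μ₁ - a) / (μ₀ - a) := by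
  have : μ₀ - a ≠ 0 := by linarith
  have : b - μ₀ ≠ 0 := by linarith
  field_simp
  ring

theorem mean_ratio_to_kelly_eq_one (h1 : a < μ₀) (h2 : μ₀ < b) {μ₁ : ℝ} (h3 : a < μ₁)
    (h4 : μ₁ < b) (α : ℝ) :
    (b - μ₁) / (b - a) * ((1 + α * (a - μ₀)) / ((b - μ₁) / (b - μ₀))) +
      (μ₁ - a) / (b - a) * ((1 + α * (b - μ₀)) / ((μ₁ - a) / (μ₀ - a))) = 1 := by
  have : μ₀ - a ≠ 0 := by linarith
  have : b - μ₀ ≠ 0 := by linarith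
  have : b - μ₁ ≠ 0 := by linarith
  have : μ₁ - a ≠ 0 := by linarith
  have : b - a ≠ 0 := by linarith
  field_simp
  ring

end CoinBetting

theorem stmt8 (a b μ₀ μ₁ : ℝ) (h1 : a < μ₀) (h2 : μ₀ < b)
    (h3 : a < μ₁) (h4 : μ₁ < b) :
    StrictConcaveOn ℝ (Ioo (1 / (μ₀ - b)) (1 / (μ₀ - a)))
      (fun α : ℝ => ((b - μ₁) / (b - a)) * Real.log (1 + α * (a - μ₀)) +
        ((μ₁ - a) / (b - a)) * Real.log (1 + α * (b - μ₀))) ∧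
    (μ₁ - μ₀) / ((μ₀ - a) * (b - μ₀)) ∈ Icc (1 / (μ₀ - b)) (1 / (μ₀ - a)) ∧
    (∀ α ∈ Ioo (1 / (μ₀ - b)) (1 / (μ₀ - a)),
      α ≠ (μ₁ - μ₀) / ((μ₀ - a) * (b - μ₀)) →
      ((b - μ₁) / (b - a)) * Real.log (1 + α * (a - μ₀)) +
        ((μ₁ - a) / (b - a)) * Real.log (1 + α * (b - μ₀)) <
      ((b - μ₁) / (b - a)) *
          Real.log (1 + ((μ₁ - μ₀) / ((μ₀ - a) * (b - μ₀))) * (a - μ₀)) +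
        ((μ₁ - a) / (b - a)) *
          Real.log (1 + ((μ₁ - μ₀) / ((μ₀ - a) * (b - μ₀))) * (b - μ₀))) := by
  have hab : a ≤ b := (h1.trans h2).le
  have hba : b - a ≠ 0 := by linarith
  have hp : 0 < (b - μ₁) / (b - a) := div_pos (by linarith) (by linarith)
  have hq : 0 < (μ₁ - a) / (b - a) := div_pos (by linarith) (by linarith)
  have hposa := fun α (hα : α ∈ _) => one_add_mul_sub_pos h1 h2 hα (left_mem_Icc.2 hab)
  have hposb := fun α (hα : α ∈ _) => one_add_mul_sub_pos h1 h2 hα (right_mem_Icc.2 hab)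
  refine ⟨?_, Ioo_subset_Icc_self (kelly_mem_Ioo h1 h2 h3 h4), fun α hα hne => ?_⟩
  · exact ((strictConcaveOn_log_one_add_mul (convex_Ioo _ _) (by linarith) hposa).const_mul hp).add
      ((strictConcaveOn_log_one_add_mul (convex_Ioo _ _) (by linarith) hposb).const_mul hq)
  rw [one_add_kelly_mul_sub_left h1 h2, one_add_kelly_mul_sub_right h1 h2]
  refine mul_log_add_mul_log_lt_of_mean_ratio_eq_one hp hq (by field_simp; ring) (hposa α hα)
    (hposb α hα) (div_pos (by linarith) (by linarith)) (div_pos (by linarith) (by linarith)) ?_ ?_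
  · exact mean_ratio_to_kelly_eq_one h1 h2 h3 h4 α
  · rw [← one_add_kelly_mul_sub_left h1 h2 μ₁]
    simpa [sub_ne_zero.2 h1.ne] using hne
end

section
/- The GROW value for testing E_P[X] = μ₀ against E_Q[X] = μ₁ on [a,b] satisfies GROW = sup_{α ∈ I} inf over Q with mean μ₁ of E_Q[log(1+α(X-μ₀))] = sup_{α ∈ I} [((b-μ₁)/(b-a)) log(1+α(a-μ₀)) + ((μ₁-a)/(b-a)) log(1+α(b-μ₀))], where I = [1/(μ₀-b), 1/(μ₀-a)]; i.e., the worst-case alternative for every coin-betting e-variable is the two-point measure q δ_a + (1-q) δ_b with q = (b-μ₁)/(b-a). -/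
open MeasureTheory Set

/-- Extended-real logarithm with the convention `log x = -∞` for `x ≤ 0`. -/
noncomputable def logE (x : ℝ) : EReal :=
  if x ≤ 0 then ⊥ else ((Real.log x : ℝ) : EReal)

/-- Worst-case e-power of the coin-betting e-variable `x ↦ 1 + α (x - μ₀)` over
probability measures on `[a,b]` with mean `μ`: the infimum of `E_Q[log (1 + α (X - μ₀))]`,
where the e-power is `-∞` (i.e. `⊥`) when the log is not `Q`-integrable or the
e-variable vanishes on a set of positive `Q`-measure. -/
noncomputable def worstEPower (a b μ₀ μ α : ℝ) : EReal :=
  sInf {y : EReal | ∃ Q : Measure ℝ, IsProbabilityMeasure Q ∧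
    Q (Icc a b)ᶜ = 0 ∧ (∫ t, t ∂Q) = μ ∧
    (((Q {t | 1 + α * (t - μ₀) ≤ 0} = 0 ∧
        Integrable (fun t => Real.log (1 + α * (t - μ₀))) Q) ∧
       y = ((∫ t, Real.log (1 + α * (t - μ₀)) ∂Q : ℝ) : EReal)) ∨
     (¬(Q {t | 1 + α * (t - μ₀) ≤ 0} = 0 ∧
        Integrable (fun t => Real.log (1 + α * (t - μ₀))) Q) ∧ y = ⊥))}

/-!
Concavity of `t ↦ log (1 + α (t - μ₀))` on `[a,b]` bounds it below by its secant through the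
endpoints. The secant is affine, so its expectation under any law `Q` on `[a,b]` depends only on
the mean `μ₁` of `Q`; and the two-point law on `{a, b}` with mean `μ₁` attains it. When the
e-variable vanishes at `a` or `b`, that law charges the zero, so both sides are `-∞`.
-/

section Concave

variable {a b : ℝ} {φ : ℝ → ℝ}

theorem ConcaveOn.secant_le (hφ : ConcaveOn ℝ (Icc a b) φ) (hab : a < b) {t : ℝ}
    (ht : t ∈ Icc a b) :
    (b - t) / (b - a) * φ a + (t - a) / (b - a) * φ b ≤ φ t := by
  have hba : 0 < b - a := sub_pos.2 hab
  have ht_eq : (b - t) / (b - a) * a + (t - a) / (b - a) * b = t := by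
    field_simp; ring
  have h := hφ.2 (left_mem_Icc.2 hab.le) (right_mem_Icc.2 hab.le)
    (div_nonneg (sub_nonneg.2 ht.2) hba.le) (div_nonneg (sub_nonneg.2 ht.1) hba.le)
    (by field_simp; ring)
  simpa only [smul_eq_mul, ht_eq] using h

theorem ConcaveOn.log {s : Set ℝ} (hφ : ConcaveOn ℝ s φ) (hpos : ∀ t ∈ s, 0 < φ t) :
    ConcaveOn ℝ s (fun t => Real.log (φ t)) := by
  refine ⟨hφ.1, fun x hx y hy u v hu hv huv => ?_⟩
  calc u • Real.log (φ x) + v • Real.log (φ y)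
      ≤ Real.log (u • φ x + v • φ y) :=
        strictConcaveOn_log_Ioi.concaveOn.2 (hpos x hx) (hpos y hy) hu hv huv
    _ ≤ Real.log (φ (u • x + v • y)) :=
        Real.log_le_log (convex_Ioi (0 : ℝ) (hpos x hx) (hpos y hy) hu hv huv)
          (hφ.2 hx hy hu hv huv)

theorem ContinuousOn.integrable_of_ae_mem {Q : Measure ℝ} [IsFiniteMeasure Q]
    (hφ : ContinuousOn φ (Icc a b)) (hQ : ∀ᵐ t ∂Q, t ∈ Icc a b) : Integrable φ Q := by
  have h := hφ.integrableOn_compact isCompact_Icc (μ := Q)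
  rwa [IntegrableOn, Measure.restrict_eq_self_of_ae_mem hQ] at h

/-- The Edmundson–Madansky inequality. -/
theorem ConcaveOn.secant_le_integral (hφ : ConcaveOn ℝ (Icc a b) φ) (hab : a < b)
    {Q : Measure ℝ} [IsProbabilityMeasure Q] (hQ : ∀ᵐ t ∂Q, t ∈ Icc a b)
    (hφQ : Integrable φ Q) :
    (b - ∫ t, t ∂Q) / (b - a) * φ a + ((∫ t, t ∂Q) - a) / (b - a) * φ b ≤ ∫ t, φ t ∂Q := by
  have hba : b - a ≠ 0 := (sub_pos.2 hab).ne'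
  set s₀ := (b * φ a - a * φ b) / (b - a)
  set s₁ := (φ b - φ a) / (b - a)
  have hsecant : ∀ t, (b - t) / (b - a) * φ a + (t - a) / (b - a) * φ b = s₀ + s₁ * t := by
    intro t; simp only [s₀, s₁]; field_simp; ring
  have hid : Integrable (fun t : ℝ => t) Q := continuousOn_id.integrable_of_ae_mem hQ
  calc (b - ∫ t, t ∂Q) / (b - a) * φ a + ((∫ t, t ∂Q) - a) / (b - a) * φ b
      = ∫ t, s₀ + s₁ * t ∂Q := by
        rw [hsecant, integral_add (integrable_const _) (hid.const_mul _), integral_const,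
          integral_const_mul, probReal_univ, one_smul]
    _ ≤ ∫ t, φ t ∂Q :=
        integral_mono_ae ((integrable_const _).add (hid.const_mul _)) hφQ
          (hQ.mono fun t ht => (hsecant t).symm.trans_le (hφ.secant_le hab ht))

end Concave

noncomputable def twoPoint (a b p q : ℝ) : Measure ℝ :=
  ENNReal.ofReal p • Measure.dirac a + ENNReal.ofReal q • Measure.dirac b

section TwoPoint

variable {a b p q : ℝ}

theorem twoPoint_apply (s : Set ℝ) :
    twoPoint a b p q s = ENNReal.ofReal p * s.indicator 1 a + ENNReal.ofReal q * s.indicator 1 b := by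
  simp [twoPoint, Measure.dirac_apply]

theorem twoPoint_eq_zero_iff (hp : 0 < p) (hq : 0 < q) {s : Set ℝ} :
    twoPoint a b p q s = 0 ↔ a ∉ s ∧ b ∉ s := by
  by_cases ha : a ∈ s <;> by_cases hb : b ∈ s <;> simp [twoPoint_apply, ha, hb, hp, hq]

theorem isProbabilityMeasure_twoPoint (hp : 0 ≤ p) (hq : 0 ≤ q) (hpq : p + q = 1) :
    IsProbabilityMeasure (twoPoint a b p q) :=
  ⟨by simp [twoPoint_apply, ← ENNReal.ofReal_add hp hq, hpq]⟩

theorem integrable_twoPoint (f : ℝ → ℝ) : Integrable f (twoPoint a b p q) :=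
  ((integrable_dirac enorm_lt_top).smul_measure ENNReal.ofReal_ne_top).add_measure
    ((integrable_dirac enorm_lt_top).smul_measure ENNReal.ofReal_ne_top)

theorem integral_twoPoint (hp : 0 ≤ p) (hq : 0 ≤ q) (f : ℝ → ℝ) :
    ∫ t, f t ∂twoPoint a b p q = p * f a + q * f b := by
  rw [twoPoint, integral_add_measure, integral_smul_measure, integral_smul_measure,
    integral_dirac, integral_dirac, ENNReal.toReal_ofReal hp, ENNReal.toReal_ofReal hq,
    smul_eq_mul, smul_eq_mul]
  all_goals exact (integrable_dirac enorm_lt_top).smul_measure ENNReal.ofReal_ne_top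

end TwoPoint

def probWithMean (a b μ : ℝ) : Set (Measure ℝ) :=
  {Q | IsProbabilityMeasure Q ∧ Q (Icc a b)ᶜ = 0 ∧ ∫ t, t ∂Q = μ}

theorem twoPoint_mem_probWithMean {a b μ : ℝ} (hab : a < b) (haμ : a ≤ μ) (hμb : μ ≤ b) :
    twoPoint a b ((b - μ) / (b - a)) ((μ - a) / (b - a)) ∈ probWithMean a b μ := by
  have hba : 0 < b - a := sub_pos.2 hab
  have hp : 0 ≤ (b - μ) / (b - a) := div_nonneg (by linarith) hba.le
  have hq : 0 ≤ (μ - a) / (b - a) := div_nonneg (by linarith) hba.le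
  refine ⟨isProbabilityMeasure_twoPoint hp hq (by field_simp; ring), ?_, ?_⟩
  · simp [twoPoint_apply, hab.le]
  · rw [integral_twoPoint hp hq]
    field_simp
    ring

open scoped Classical in
noncomputable def ePower (g : ℝ → ℝ) (Q : Measure ℝ) : EReal :=
  if Q {t | g t ≤ 0} = 0 ∧ Integrable (fun t => Real.log (g t)) Q then
    ((∫ t, Real.log (g t) ∂Q : ℝ) : EReal)
  else ⊥

theorem worstEPower_eq_sInf_ePower (a b μ₀ μ α : ℝ) :
    worstEPower a b μ₀ μ α =
      sInf (ePower (fun t => 1 + α * (t - μ₀)) '' probWithMean a b μ) := by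
  unfold worstEPower ePower probWithMean
  congr 1
  ext y
  simp only [mem_image]
  constructor
  · rintro ⟨Q, hQ, hsupp, hmean, ⟨hgood, rfl⟩ | ⟨hbad, rfl⟩⟩
    · exact ⟨Q, ⟨hQ, hsupp, hmean⟩, if_pos hgood⟩
    · exact ⟨Q, ⟨hQ, hsupp, hmean⟩, if_neg hbad⟩
  · rintro ⟨Q, ⟨hQ, hsupp, hmean⟩, rfl⟩
    refine ⟨Q, hQ, hsupp, hmean, ?_⟩
    split_ifs with h
    exacts [Or.inl ⟨h, rfl⟩, Or.inr ⟨h, rfl⟩]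

section EPower

variable {a b p q : ℝ} {g : ℝ → ℝ}

theorem ePower_twoPoint (hp : 0 < p) (hq : 0 < q) :
    ePower g (twoPoint a b p q) = (p : EReal) * logE (g a) + (q : EReal) * logE (g b) := by
  by_cases ha : g a ≤ 0
  · rw [ePower, if_neg, logE, if_pos ha, EReal.coe_mul_bot_of_pos hp, EReal.bot_add]
    exact fun h => ((twoPoint_eq_zero_iff hp hq).1 h.1).1 ha
  by_cases hb : g b ≤ 0
  · rw [ePower, if_neg, logE.eq_def (g b), if_pos hb, EReal.coe_mul_bot_of_pos hq, EReal.add_bot]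
    exact fun h => ((twoPoint_eq_zero_iff hp hq).1 h.1).2 hb
  rw [ePower, if_pos ⟨(twoPoint_eq_zero_iff hp hq).2 ⟨ha, hb⟩, integrable_twoPoint _⟩,
    integral_twoPoint hp.le hq.le, logE, if_neg ha, logE, if_neg hb]
  rfl

theorem secant_le_ePower (hg : ConcaveOn ℝ (Icc a b) g) (hgc : ContinuousOn g (Icc a b))
    (hab : a < b) (ha : 0 < g a) (hb : 0 < g b) {μ : ℝ} {Q : Measure ℝ}
    (hQ : Q ∈ probWithMean a b μ) :
    (((b - μ) / (b - a) * Real.log (g a) + (μ - a) / (b - a) * Real.log (g b) : ℝ) : EReal) ≤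
      ePower g Q := by
  obtain ⟨hQ, hsupp, rfl⟩ := hQ
  have hQ_Icc : ∀ᵐ t ∂Q, t ∈ Icc a b := measure_eq_zero_iff_ae_notMem.1 hsupp |>.mono
    fun _ h => not_not.1 h
  have hpos : ∀ t ∈ Icc a b, 0 < g t := by
    intro t ht
    have hba : 0 < b - a := sub_pos.2 hab
    exact lt_of_lt_of_le (convex_Ioi (0 : ℝ) ha hb (div_nonneg (sub_nonneg.2 ht.2) hba.le)
      (div_nonneg (sub_nonneg.2 ht.1) hba.le) (by field_simp; ring)) (hg.secant_le hab ht)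
  have hint : Integrable (fun t => Real.log (g t)) Q :=
    (hgc.log fun t ht => (hpos t ht).ne').integrable_of_ae_mem hQ_Icc
  have hnull : Q {t | g t ≤ 0} = 0 :=
    measure_mono_null (fun t (ht : g t ≤ 0) (hmem : t ∈ Icc a b) => (hpos t hmem).not_ge ht)
      hsupp
  rw [ePower, if_pos ⟨hnull, hint⟩, EReal.coe_le_coe_iff]
  exact (hg.log hpos).secant_le_integral hab hQ_Icc hint

end EPower

theorem sInf_ePower_probWithMean {a b μ : ℝ} {g : ℝ → ℝ} (hg : ConcaveOn ℝ (Icc a b) g)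
    (hgc : ContinuousOn g (Icc a b)) (haμ : a < μ) (hμb : μ < b) :
    sInf (ePower g '' probWithMean a b μ) =
      (((b - μ) / (b - a) : ℝ) : EReal) * logE (g a) +
        (((μ - a) / (b - a) : ℝ) : EReal) * logE (g b) := by
  have hab : a < b := haμ.trans hμb
  have hp : 0 < (b - μ) / (b - a) := div_pos (by linarith) (by linarith)
  have hq : 0 < (μ - a) / (b - a) := div_pos (by linarith) (by linarith)
  refine le_antisymm ?_ (le_sInf ?_)
  · rw [← ePower_twoPoint hp hq]
    exact sInf_le (mem_image_of_mem _ (twoPoint_mem_probWithMean hab haμ.le hμb.le))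
  rintro _ ⟨Q, hQ, rfl⟩
  by_cases ha : g a ≤ 0
  · simp [logE, ha, EReal.coe_mul_bot_of_pos hp]
  by_cases hb : g b ≤ 0
  · simp [logE, hb, EReal.coe_mul_bot_of_pos hq]
  rw [logE, if_neg ha, logE, if_neg hb, ← EReal.coe_mul, ← EReal.coe_mul, ← EReal.coe_add]
  exact secant_le_ePower hg hgc hab (not_le.1 ha) (not_le.1 hb) hQ

theorem stmt9_general (a b μ₀ μ₁ : ℝ)
    (h3 : a < μ₁) (h4 : μ₁ < b) :
    (∀ α ∈ Icc (1 / (μ₀ - b)) (1 / (μ₀ - a)),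
      worstEPower a b μ₀ μ₁ α =
        (((b - μ₁) / (b - a) : ℝ) : EReal) * logE (1 + α * (a - μ₀)) +
        (((μ₁ - a) / (b - a) : ℝ) : EReal) * logE (1 + α * (b - μ₀))) ∧
    (⨆ α ∈ Icc (1 / (μ₀ - b)) (1 / (μ₀ - a)), worstEPower a b μ₀ μ₁ α) =
      ⨆ α ∈ Icc (1 / (μ₀ - b)) (1 / (μ₀ - a)),
        ((((b - μ₁) / (b - a) : ℝ) : EReal) * logE (1 + α * (a - μ₀)) +
         (((μ₁ - a) / (b - a) : ℝ) : EReal) * logE (1 + α * (b - μ₀))) := by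
  have key : ∀ α, worstEPower a b μ₀ μ₁ α =
      (((b - μ₁) / (b - a) : ℝ) : EReal) * logE (1 + α * (a - μ₀)) +
        (((μ₁ - a) / (b - a) : ℝ) : EReal) * logE (1 + α * (b - μ₀)) := by
    intro α
    have hconc : ConcaveOn ℝ (Icc a b) (fun t => 1 + α * (t - μ₀)) :=
      ⟨convex_Icc a b, fun x _ y _ u v _ _ huv => le_of_eq <| by
        simp only [smul_eq_mul]; linear_combination (1 - α * μ₀) * huv⟩
    rw [worstEPower_eq_sInf_ePower]
    exact sInf_ePower_probWithMean hconc (by fun_prop) h3 h4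
  exact ⟨fun α _ => key α, iSup_congr fun α => iSup_congr fun _ => key α⟩

theorem stmt9 (a b μ₀ μ₁ : ℝ) (h1 : a < μ₀) (h2 : μ₀ < b)
    (h3 : a < μ₁) (h4 : μ₁ < b) :
    (∀ α ∈ Icc (1 / (μ₀ - b)) (1 / (μ₀ - a)),
      worstEPower a b μ₀ μ₁ α =
        (((b - μ₁) / (b - a) : ℝ) : EReal) * logE (1 + α * (a - μ₀)) +
        (((μ₁ - a) / (b - a) : ℝ) : EReal) * logE (1 + α * (b - μ₀))) ∧
    (⨆ α ∈ Icc (1 / (μ₀ - b)) (1 / (μ₀ - a)), worstEPower a b μ₀ μ₁ α) =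
      ⨆ α ∈ Icc (1 / (μ₀ - b)) (1 / (μ₀ - a)),
        ((((b - μ₁) / (b - a) : ℝ) : EReal) * logE (1 + α * (a - μ₀)) +
         (((μ₁ - a) / (b - a) : ℝ) : EReal) * logE (1 + α * (b - μ₀))) :=
  stmt9_general a b μ₀ μ₁ h3 h4
end

section
/- Let a < μ₀ < μ₁ < b, α_max = 1/(μ₀-a), α_GW = (μ₁-μ₀)/((μ₀-a)(b-μ₀)). Then there exists a unique α* ∈ (α_GW, α_max) such that F_{α*, α_max}(μ₁) = G_{α*, α_GW}(μ₁), where F_{α,β}(x) = log((1+α(x-μ₀))/(1+β(x-μ₀))) and G_{α,β}(x) = ((b-x)/(b-a)) F_{α,β}(a) + ((x-a)/(b-a)) F_{α,β}(b). -/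
open Set

/-- `F_{α,β}(x) = log((1 + α(x-μ₀)) / (1 + β(x-μ₀)))`. -/
noncomputable def Fab (μ₀ α β x : ℝ) : ℝ :=
  Real.log (1 + α * (x - μ₀)) - Real.log (1 + β * (x - μ₀))

/-- `G_{α,β}`: affine interpolation of `F_{α,β}` between its values at `a` and `b`. -/
noncomputable def Gab (a b μ₀ α β x : ℝ) : ℝ :=
  ((b - x) / (b - a)) * Fab μ₀ α β a + ((x - a) / (b - a)) * Fab μ₀ α β b

/-! The map `α ↦ F_{α,α_max}(μ₁) - G_{α,α_GW}(μ₁)` is strictly increasing on `[α_GW, α_max)`: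
the first term increases with `α`, and the second decreases because its derivative in `α` has
numerator `(μ₁ - μ₀) - α (μ₀ - a)(b - μ₀)`. It is negative at `α_GW`, where `G` vanishes, and
tends to `+∞` as `α ↑ α_max`, since `1 + α (a - μ₀) ↓ 0` sends `F_{α,α_GW}(a)` to `-∞`
(a limit is needed: at `α_max` itself `Real.log 0 = 0` gives a junk value).
The intermediate value theorem then gives exactly one zero. -/

open Filter Topology

theorem existsUnique_mem_Ioo_eq_zero_of_strictMonoOn {f : ℝ → ℝ} {p q : ℝ} (hpq : p < q)
    (hcont : ContinuousOn f (Ico p q)) (hmono : StrictMonoOn f (Ico p q)) (hp : f p < 0)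
    (hq : Tendsto f (𝓝[<] q) atTop) : ∃! x, x ∈ Ioo p q ∧ f x = 0 := by
  obtain ⟨w, hw, hfw⟩ : ∃ w ∈ Ioo p q, 0 < f w :=
    ((show ∀ᶠ w in 𝓝[<] q, w ∈ Ioo p q from Ioo_mem_nhdsLT hpq).and (hq.eventually_gt_atTop 0)).exists
  obtain ⟨x, hx, hfx⟩ :=
    intermediate_value_Ioo hw.1.le (hcont.mono (Icc_subset_Ico_right hw.2)) ⟨hp, hfw⟩
  refine ⟨x, ⟨⟨hx.1, hx.2.trans hw.2⟩, hfx⟩, fun y ⟨hy, hfy⟩ => ?_⟩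
  exact hmono.injOn (Ioo_subset_Ico_self hy) ⟨hx.1.le, hx.2.trans hw.2⟩ (hfy.trans hfx.symm)

theorem hasDerivAt_log_one_add_mul {t α : ℝ} (h : 1 + α * t ≠ 0) :
    HasDerivAt (fun α => Real.log (1 + α * t)) (t / (1 + α * t)) α := by
  simpa using (((hasDerivAt_id α).mul_const t).const_add 1).log h

section FabGab

variable {a b μ₀ α β x : ℝ}

@[simp]
theorem Fab_self : Fab μ₀ β β x = 0 :=
  sub_self _

@[simp]
theorem Gab_self : Gab a b μ₀ β β x = 0 := by
  simp [Gab]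

theorem continuousAt_Fab (h : 1 + α * (x - μ₀) ≠ 0) :
    ContinuousAt (fun α => Fab μ₀ α β x) α :=
  ((hasDerivAt_log_one_add_mul h).sub_const _).continuousAt

theorem hasDerivAt_Gab (ha : 1 + α * (a - μ₀) ≠ 0) (hb : 1 + α * (b - μ₀) ≠ 0) :
    HasDerivAt (fun α => Gab a b μ₀ α β x)
      ((b - x) / (b - a) * ((a - μ₀) / (1 + α * (a - μ₀))) +
        (x - a) / (b - a) * ((b - μ₀) / (1 + α * (b - μ₀)))) α :=
  (((hasDerivAt_log_one_add_mul ha).sub_const _).const_mul _).add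
    (((hasDerivAt_log_one_add_mul hb).sub_const _).const_mul _)

theorem Fab_strictMonoOn (hx : μ₀ < x) :
    StrictMonoOn (fun α => Fab μ₀ α β x) {α | 0 < 1 + α * (x - μ₀)} := by
  intro α hα α' _ hαα'
  exact sub_lt_sub_right (Real.log_lt_log hα (by nlinarith)) _

theorem one_add_mul_pos_of_mem_Ico (ha : a < μ₀) (hb : μ₀ < b) (hx : a < x)
    (hα : α ∈ Ico ((x - μ₀) / ((μ₀ - a) * (b - μ₀))) (1 / (μ₀ - a))) :
    0 < 1 + α * (a - μ₀) ∧ 0 < 1 + α * (b - μ₀) := by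
  have hua : 0 < μ₀ - a := sub_pos.2 ha
  have hbu : 0 < b - μ₀ := sub_pos.2 hb
  obtain ⟨hlo, hhi⟩ := hα
  rw [div_le_iff₀ (by positivity)] at hlo
  rw [lt_div_iff₀ hua] at hhi
  constructor
  · nlinarith
  · nlinarith

theorem continuousOn_Gab (ha : a < μ₀) (hb : μ₀ < b) (hx : a < x) :
    ContinuousOn (fun α => Gab a b μ₀ α β x)
      (Ico ((x - μ₀) / ((μ₀ - a) * (b - μ₀))) (1 / (μ₀ - a))) := fun _ hα =>
  have hpos := one_add_mul_pos_of_mem_Ico ha hb hx hα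
  (hasDerivAt_Gab hpos.1.ne' hpos.2.ne').continuousAt.continuousWithinAt

theorem Gab_strictAntiOn (ha : a < μ₀) (hb : μ₀ < b) (hx : a < x) :
    StrictAntiOn (fun α => Gab a b μ₀ α β x)
      (Ico ((x - μ₀) / ((μ₀ - a) * (b - μ₀))) (1 / (μ₀ - a))) := by
  refine strictAntiOn_of_deriv_neg (convex_Ico _ _) (continuousOn_Gab ha hb hx) (fun α hα => ?_)
  rw [interior_Ico] at hα
  obtain ⟨hpa, hpb⟩ := one_add_mul_pos_of_mem_Ico ha hb hx (Ioo_subset_Ico_self hα)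
  rw [(hasDerivAt_Gab hpa.ne' hpb.ne').deriv]
  -- The weights `(b - x)/(b - a)` and `(x - a)/(b - a)` are those of `x` as a combination of `a`, `b`.
  have hderiv : (b - x) / (b - a) * ((a - μ₀) / (1 + α * (a - μ₀))) +
      (x - a) / (b - a) * ((b - μ₀) / (1 + α * (b - μ₀))) =
      ((x - μ₀) - α * ((μ₀ - a) * (b - μ₀))) / ((1 + α * (a - μ₀)) * (1 + α * (b - μ₀))) := by
    have hab : b - a ≠ 0 := by linarith
    rw [div_mul_div_comm, div_mul_div_comm, div_add_div _ _ (by positivity) (by positivity),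
      div_eq_div_iff (by positivity) (by positivity)]
    ring
  rw [hderiv]
  refine div_neg_of_neg_of_pos ?_ (mul_pos hpa hpb)
  have := hα.1
  rw [div_lt_iff₀ (by positivity)] at this
  linarith

theorem tendsto_Gab_atBot (ha : a < μ₀) (hb : μ₀ < b) (hx : x < b) :
    Tendsto (fun α => Gab a b μ₀ α β x) (𝓝[<] (1 / (μ₀ - a))) atBot := by
  have hua : 0 < μ₀ - a := sub_pos.2 ha
  have hzero : Tendsto (fun α => 1 + α * (a - μ₀)) (𝓝[<] (1 / (μ₀ - a))) (𝓝[>] 0) := by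
    refine tendsto_nhdsWithin_iff.2 ⟨?_, ?_⟩
    · have hval : 1 + 1 / (μ₀ - a) * (a - μ₀) = 0 := by
        field_simp
        ring
      exact ((by fun_prop : Continuous fun α : ℝ => 1 + α * (a - μ₀)).tendsto' _ _ hval).mono_left
        nhdsWithin_le_nhds
    · filter_upwards [self_mem_nhdsWithin] with α hα
      rw [mem_Iio, lt_div_iff₀ hua] at hα
      show 0 < 1 + α * (a - μ₀)
      nlinarith
  have hlog_a := tendsto_atBot_add_const_right _ (-Real.log (1 + β * (a - μ₀)))
    (Real.tendsto_log_nhdsGT_zero.comp hzero)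
  have hlog_b : ContinuousAt (fun α => Fab μ₀ α β b) (1 / (μ₀ - a)) :=
    continuousAt_Fab (by rw [one_div_mul_eq_div]; positivity)
  exact (hlog_a.const_mul_atBot (div_pos (by linarith) (by linarith))).atBot_add
    ((continuousAt_const.mul hlog_b).tendsto.mono_left nhdsWithin_le_nhds)

end FabGab

theorem stmt10 (a b μ₀ μ₁ : ℝ) (h1 : a < μ₀) (h2 : μ₀ < μ₁) (h3 : μ₁ < b) :
    ∃! α : ℝ,
      α ∈ Ioo ((μ₁ - μ₀) / ((μ₀ - a) * (b - μ₀))) (1 / (μ₀ - a)) ∧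
      Fab μ₀ α (1 / (μ₀ - a)) μ₁ =
        Gab a b μ₀ α ((μ₁ - μ₀) / ((μ₀ - a) * (b - μ₀))) μ₁ := by
  set αGW := (μ₁ - μ₀) / ((μ₀ - a) * (b - μ₀))
  set αmax := 1 / (μ₀ - a)
  have hb : μ₀ < b := h2.trans h3
  have ha : a < μ₁ := h1.trans h2
  have hαGW : 0 < αGW := div_pos (sub_pos.2 h2) (mul_pos (sub_pos.2 h1) (sub_pos.2 hb))
  have hαGW_lt : αGW < αmax := by
    rw [div_lt_div_iff₀ (mul_pos (sub_pos.2 h1) (sub_pos.2 hb)) (sub_pos.2 h1)]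
    nlinarith
  have hpos : ∀ α, αGW ≤ α → 0 < 1 + α * (μ₁ - μ₀) := fun α hα => by
    nlinarith [sub_pos.2 h2]
  have hF := Fab_strictMonoOn (β := αmax) h2
  have hG := Gab_strictAntiOn (β := αGW) h1 hb ha
  have hcont : ContinuousOn (fun α => Fab μ₀ α αmax μ₁ - Gab a b μ₀ α αGW μ₁) (Ico αGW αmax) :=
    fun α hα => (continuousAt_Fab (hpos α hα.1).ne').continuousWithinAt.sub
      (continuousOn_Gab h1 hb ha α hα)
  have hmono : StrictMonoOn (fun α => Fab μ₀ α αmax μ₁ - Gab a b μ₀ α αGW μ₁) (Ico αGW αmax) :=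
    fun α hα α' hα' hαα' => sub_lt_sub (hF (hpos α hα.1) (hpos α' hα'.1) hαα') (hG hα hα' hαα')
  have hneg : Fab μ₀ αGW αmax μ₁ - Gab a b μ₀ αGW αGW μ₁ < 0 := by
    rw [Gab_self, sub_zero, ← Fab_self (μ₀ := μ₀) (β := αmax) (x := μ₁)]
    exact hF (hpos _ le_rfl) (hpos _ hαGW_lt.le) hαGW_lt
  have htop : Tendsto (fun α => Fab μ₀ α αmax μ₁ - Gab a b μ₀ α αGW μ₁) (𝓝[<] αmax) atTop := by
    have hF_lim := ((continuousAt_Fab (β := αmax) (hpos _ hαGW_lt.le).ne').tendsto).mono_left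
      (nhdsWithin_le_nhds (s := Iio αmax))
    exact (hF_lim.add_atTop (tendsto_neg_atBot_atTop.comp (tendsto_Gab_atBot h1 hb h3))).congr
      fun _ => (sub_eq_add_neg _ _).symm
  simpa only [sub_eq_zero] using
    existsUnique_mem_Ioo_eq_zero_of_strictMonoOn hαGW_lt hcont hmono hneg htop
end

section
/- For a < μ₀ < b and the agnostic alternative {Q : E_Q[X] ≠ μ₀}, the GROW value is 0: sup over α ∈ [1/(μ₀-b), 1/(μ₀-a)] of inf over μ ≠ μ₀ of the c-envelope f_α^c(μ) equals 0, attained uniquely by α = 0 (i.e., the constant e-variable 1). -/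
open MeasureTheory Set

/-- Infimum of `E_Q[log (1 + α (X - μ₀))]` over probability measures `Q` on `[a,b]`
with mean `μ` (the c-envelope of `f_α` at `μ`), with the e-power set to `-∞` when the
log is not integrable or the e-variable vanishes with positive probability. -/
noncomputable def fAlphaC (a b μ₀ α μ : ℝ) : EReal :=
  sInf {y : EReal | ∃ Q : Measure ℝ, IsProbabilityMeasure Q ∧
    Q (Icc a b)ᶜ = 0 ∧ (∫ t, t ∂Q) = μ ∧
    (((Q {t | 1 + α * (t - μ₀) ≤ 0} = 0 ∧
        Integrable (fun t => Real.log (1 + α * (t - μ₀))) Q) ∧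
       y = ((∫ t, Real.log (1 + α * (t - μ₀)) ∂Q : ℝ) : EReal)) ∨
     (¬(Q {t | 1 + α * (t - μ₀) ≤ 0} = 0 ∧
        Integrable (fun t => Real.log (1 + α * (t - μ₀))) Q) ∧ y = ⊥))}

/-!
For every `α`, the envelope `f_α^c` lies below `f_α` on `[a, b]`, since the Dirac mass at `μ`
is a law on `[a, b]` with mean `μ`. For `α ≠ 0` the value `f_α(a)` (if `α > 0`) or `f_α(b)`
(if `α < 0`) is `log` of a number below `1`, or `-∞`, so the inner infimum is negative;
for `α = 0` the e-variable is the constant `1` and every envelope value is `0`.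
-/

section Envelope

variable {a b μ₀ α μ : ℝ}

lemma fAlphaC_le_log (hμ : μ ∈ Icc a b) (hpos : 0 < 1 + α * (μ - μ₀)) :
    fAlphaC a b μ₀ α μ ≤ (Real.log (1 + α * (μ - μ₀)) : EReal) := by
  refine sInf_le ⟨Measure.dirac μ, inferInstance, by simp [hμ], by simp, Or.inl ⟨⟨?_, ?_⟩, ?_⟩⟩
  · simp [hpos]
  · exact integrable_dirac enorm_lt_top
  · rw [integral_dirac]

lemma fAlphaC_eq_bot (hμ : μ ∈ Icc a b) (hnonpos : 1 + α * (μ - μ₀) ≤ 0) :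
    fAlphaC a b μ₀ α μ = ⊥ := by
  refine le_bot_iff.1 <| sInf_le
    ⟨Measure.dirac μ, inferInstance, by simp [hμ], by simp, Or.inr ⟨?_, rfl⟩⟩
  simp [hnonpos]

lemma fAlphaC_neg (hμ : μ ∈ Icc a b) (hneg : α * (μ - μ₀) < 0) : fAlphaC a b μ₀ α μ < 0 := by
  rcases lt_or_ge 0 (1 + α * (μ - μ₀)) with hpos | hnonpos
  · refine (fAlphaC_le_log hμ hpos).trans_lt ?_
    exact_mod_cast Real.log_neg hpos (by linarith)
  · simp [fAlphaC_eq_bot hμ hnonpos]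

lemma fAlphaC_zero (hμ : μ ∈ Icc a b) : fAlphaC a b μ₀ 0 μ = 0 := by
  refine le_antisymm (by simpa using fAlphaC_le_log (α := 0) (μ₀ := μ₀) hμ (by simp)) ?_
  refine le_sInf ?_
  rintro y ⟨Q, -, -, -, ⟨-, rfl⟩ | ⟨hbad, -⟩⟩
  · simp
  · simp [not_le.2 one_pos] at hbad

end Envelope

section Grow

variable {a b μ₀ α : ℝ}

lemma iInf_fAlphaC_zero (hne : (Icc a b \ {μ₀}).Nonempty) :
    (⨅ μ ∈ Icc a b \ {μ₀}, fAlphaC a b μ₀ 0 μ) = 0 := by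
  obtain ⟨μ, hμ⟩ := hne
  exact le_antisymm (iInf₂_le_of_le μ hμ (fAlphaC_zero hμ.1).le)
    (le_iInf₂ fun ν hν => (fAlphaC_zero hν.1).ge)

lemma iInf_fAlphaC_neg (h1 : a < μ₀) (h2 : μ₀ < b) (hα : α ≠ 0) :
    (⨅ μ ∈ Icc a b \ {μ₀}, fAlphaC a b μ₀ α μ) < 0 := by
  have hab : a ≤ b := (h1.trans h2).le
  rcases hα.lt_or_gt with hα | hα
  · exact (iInf₂_le b ⟨⟨hab, le_rfl⟩, h2.ne'⟩).trans_lt <|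
      fAlphaC_neg ⟨hab, le_rfl⟩ (mul_neg_of_neg_of_pos hα (sub_pos.2 h2))
  · exact (iInf₂_le a ⟨⟨le_rfl, hab⟩, h1.ne⟩).trans_lt <|
      fAlphaC_neg ⟨le_rfl, hab⟩ (mul_neg_of_pos_of_neg hα (sub_neg.2 h1))

end Grow

theorem stmt12 (a b μ₀ : ℝ) (h1 : a < μ₀) (h2 : μ₀ < b) :
    (⨆ α ∈ Icc (1 / (μ₀ - b)) (1 / (μ₀ - a)),
      ⨅ μ ∈ Icc a b \ {μ₀}, fAlphaC a b μ₀ α μ) = 0 ∧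
    (⨅ μ ∈ Icc a b \ {μ₀}, fAlphaC a b μ₀ 0 μ) = 0 ∧
    (∀ α ∈ Icc (1 / (μ₀ - b)) (1 / (μ₀ - a)), α ≠ 0 →
      (⨅ μ ∈ Icc a b \ {μ₀}, fAlphaC a b μ₀ α μ) < 0) := by
  have hne : (Icc a b \ {μ₀}).Nonempty := ⟨a, ⟨le_rfl, (h1.trans h2).le⟩, h1.ne⟩
  have hzero : (0 : ℝ) ∈ Icc (1 / (μ₀ - b)) (1 / (μ₀ - a)) :=
    ⟨(one_div_neg.2 (sub_neg.2 h2)).le, (one_div_pos.2 (sub_pos.2 h1)).le⟩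
  have hle : ∀ α, (⨅ μ ∈ Icc a b \ {μ₀}, fAlphaC a b μ₀ α μ) ≤ 0 := fun α => by
    rcases eq_or_ne α 0 with rfl | hα
    · exact (iInf_fAlphaC_zero hne).le
    · exact (iInf_fAlphaC_neg h1 h2 hα).le
  refine ⟨le_antisymm (iSup₂_le fun α _ => hle α) ?_, iInf_fAlphaC_zero hne,
    fun α _ hα => iInf_fAlphaC_neg h1 h2 hα⟩
  exact (iInf_fAlphaC_zero hne).ge.trans
    (le_iSup₂ (f := fun α _ => ⨅ μ ∈ Icc a b \ {μ₀}, fAlphaC a b μ₀ α μ) 0 hzero)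
end

section
/- Let a < μ₀ < b and set r = ((μ₁-a)/(b-a))^{(μ₁-a)/(b-μ₁)} for μ₁ ∈ [μ₀, b). Then the number α̃ = ((b-μ₀) - ((μ₀-a)(b-μ₁)/(b-a)) r) / ((μ₀-a)(b-μ₀)(1 + ((b-μ₁)/(b-a)) r)) satisfies the equation F_{α̃, α_max}(b) = G_{α̃, α_GW}(μ₁), where α_max = 1/(μ₀-a), α_GW = (μ₁-μ₀)/((μ₀-a)(b-μ₀)), F_{α,β}(x) = log((1+α(x-μ₀))/(1+β(x-μ₀))), and G_{α,β}(x) = ((b-x)/(b-a)) F_{α,β}(a) + ((x-a)/(b-a)) F_{α,β}(b). -/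
open Set

/-! With `c = ((b - μ₁) / (b - a)) r`, the paper's `α̃` is `alphaOf a b μ₀ c`, the slope
for which `1 + α̃ (b - μ₀) = (b - a) / ((μ₀ - a) (1 + c))` and
`1 + α̃ (a - μ₀) = c (b - a) / ((b - μ₀) (1 + c))`.
So each value of `F` involved is `-log (1 + c)` plus an explicit logarithm, and both sides reduce
to `-log (1 + c)`: the exponent in `r` is chosen so that `(b - μ₁) log r` cancels
`(μ₁ - a) log ((b - a) / (μ₁ - a))` in the interpolation `G`. -/

open Real

noncomputable def alphaOf (a b μ₀ c : ℝ) : ℝ :=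
  ((b - μ₀) - (μ₀ - a) * c) / ((μ₀ - a) * (b - μ₀) * (1 + c))

section alphaOf

variable {a b μ₀ c : ℝ}

lemma one_add_alphaOf_mul_sub_right (ha : μ₀ - a ≠ 0) (hb : b - μ₀ ≠ 0) (hc : 1 + c ≠ 0) :
    1 + alphaOf a b μ₀ c * (b - μ₀) = (b - a) / ((μ₀ - a) * (1 + c)) := by
  unfold alphaOf
  field_simp
  ring

lemma one_add_alphaOf_mul_sub_left (ha : μ₀ - a ≠ 0) (hb : b - μ₀ ≠ 0) (hc : 1 + c ≠ 0) :
    1 + alphaOf a b μ₀ c * (a - μ₀) = c * (b - a) / ((b - μ₀) * (1 + c)) := by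
  unfold alphaOf
  field_simp
  ring

lemma Fab_alphaOf_max (ha : a < μ₀) (hb : μ₀ < b) (hc : 0 < c) :
    Fab μ₀ (alphaOf a b μ₀ c) (1 / (μ₀ - a)) b = -log (1 + c) := by
  have hp : 0 < μ₀ - a := by linarith
  have hq : 0 < b - μ₀ := by linarith
  have hL : 0 < b - a := by linarith
  have hmax : 1 + 1 / (μ₀ - a) * (b - μ₀) = (b - a) / (μ₀ - a) := by
    field_simp
    ring
  rw [Fab, one_add_alphaOf_mul_sub_right hp.ne' hq.ne' (by positivity), hmax,
    ← log_div (by positivity) (by positivity),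
    show (b - a) / ((μ₀ - a) * (1 + c)) / ((b - a) / (μ₀ - a)) = (1 + c)⁻¹ by field_simp,
    log_inv]

lemma Fab_alphaOf_GW_left {μ₁ : ℝ} (ha : a < μ₀) (hb : μ₀ < b) (hμ₁ : μ₁ < b) (hc : 0 < c) :
    Fab μ₀ (alphaOf a b μ₀ c) ((μ₁ - μ₀) / ((μ₀ - a) * (b - μ₀))) a =
      log (c * (b - a) / (b - μ₁)) - log (1 + c) := by
  have hp : 0 < μ₀ - a := by linarith
  have hq : 0 < b - μ₀ := by linarith
  have hs : 0 < b - μ₁ := by linarith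
  have hL : 0 < b - a := by linarith
  have hGW : 1 + (μ₁ - μ₀) / ((μ₀ - a) * (b - μ₀)) * (a - μ₀) = (b - μ₁) / (b - μ₀) := by
    field_simp
    ring
  rw [Fab, one_add_alphaOf_mul_sub_left hp.ne' hq.ne' (by positivity), hGW,
    ← log_div (by positivity) (by positivity), ← log_div (by positivity) (by positivity)]
  congr 1
  field_simp

lemma Fab_alphaOf_GW_right {μ₁ : ℝ} (ha : a < μ₀) (hb : μ₀ < b) (hμ₁ : a < μ₁) (hc : 0 < c) :
    Fab μ₀ (alphaOf a b μ₀ c) ((μ₁ - μ₀) / ((μ₀ - a) * (b - μ₀))) b =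
      log ((b - a) / (μ₁ - a)) - log (1 + c) := by
  have hp : 0 < μ₀ - a := by linarith
  have hq : 0 < b - μ₀ := by linarith
  have ht : 0 < μ₁ - a := by linarith
  have hL : 0 < b - a := by linarith
  have hGW : 1 + (μ₁ - μ₀) / ((μ₀ - a) * (b - μ₀)) * (b - μ₀) = (μ₁ - a) / (μ₀ - a) := by
    field_simp
    ring
  rw [Fab, one_add_alphaOf_mul_sub_right hp.ne' hq.ne' (by positivity), hGW,
    ← log_div (by positivity) (by positivity), ← log_div (by positivity) (by positivity)]
  congr 1
  field_simp

lemma Gab_alphaOf_GW {μ₁ : ℝ} (ha : a < μ₀) (hb : μ₀ < b) (haμ₁ : a < μ₁) (hμ₁b : μ₁ < b)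
    (hc : 0 < c) :
    Gab a b μ₀ (alphaOf a b μ₀ c) ((μ₁ - μ₀) / ((μ₀ - a) * (b - μ₀))) μ₁ =
      -log (1 + c) + ((b - μ₁) * log (c * (b - a) / (b - μ₁)) +
        (μ₁ - a) * log ((b - a) / (μ₁ - a))) / (b - a) := by
  have : b - a ≠ 0 := by linarith
  rw [Gab, Fab_alphaOf_GW_left ha hb hμ₁b hc, Fab_alphaOf_GW_right ha hb haμ₁ hc]
  field_simp
  ring

end alphaOf

lemma mul_log_rpow_div_add_mul_log_inv {x : ℝ} (hx : 0 < x) {s : ℝ} (hs : s ≠ 0) (t : ℝ) :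
    s * log (x ^ (t / s)) + t * log x⁻¹ = 0 := by
  rw [log_rpow hx, log_inv]
  field_simp
  ring

theorem stmt13 (a b μ₀ μ₁ : ℝ) (h1 : a < μ₀) (h2 : μ₀ < b)
    (h3 : μ₀ ≤ μ₁) (h4 : μ₁ < b) :
    Fab μ₀
        (((b - μ₀) - ((μ₀ - a) * (b - μ₁) / (b - a)) *
            (((μ₁ - a) / (b - a)) ^ ((μ₁ - a) / (b - μ₁)))) /
          ((μ₀ - a) * (b - μ₀) *
            (1 + ((b - μ₁) / (b - a)) * (((μ₁ - a) / (b - a)) ^ ((μ₁ - a) / (b - μ₁))))))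
        (1 / (μ₀ - a)) b =
      Gab a b μ₀
        (((b - μ₀) - ((μ₀ - a) * (b - μ₁) / (b - a)) *
            (((μ₁ - a) / (b - a)) ^ ((μ₁ - a) / (b - μ₁)))) /
          ((μ₀ - a) * (b - μ₀) *
            (1 + ((b - μ₁) / (b - a)) * (((μ₁ - a) / (b - a)) ^ ((μ₁ - a) / (b - μ₁))))))
        ((μ₁ - μ₀) / ((μ₀ - a) * (b - μ₀))) μ₁ := by
  have hx : 0 < (μ₁ - a) / (b - a) := div_pos (by linarith) (by linarith)
  rw [show ∀ r, (μ₀ - a) * (b - μ₁) / (b - a) * r = (μ₀ - a) * ((b - μ₁) / (b - a) * r) by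
    intro r; ring]
  set c := (b - μ₁) / (b - a) * ((μ₁ - a) / (b - a)) ^ ((μ₁ - a) / (b - μ₁)) with hc_def
  have hc : 0 < c := mul_pos (div_pos (by linarith) (by linarith)) (rpow_pos_of_pos hx _)
  have hcr : c * (b - a) / (b - μ₁) = ((μ₁ - a) / (b - a)) ^ ((μ₁ - a) / (b - μ₁)) := by
    rw [hc_def]
    field_simp [show b - a ≠ 0 by linarith, show b - μ₁ ≠ 0 by linarith]
  change Fab μ₀ (alphaOf a b μ₀ c) _ b = Gab a b μ₀ (alphaOf a b μ₀ c) _ μ₁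
  rw [Fab_alphaOf_max h1 h2 hc, Gab_alphaOf_GW h1 h2 (by linarith) h4 hc, hcr,
    ← inv_div (μ₁ - a), mul_log_rpow_div_add_mul_log_inv hx (by linarith), zero_div, add_zero]
end

section
/- Let a < μ₀ < b, α* > 0 in (0, 1/(μ₀-a)], and β ∈ [1/(μ₀-b), 0]. Fix x₁, x₂ with a ≤ x₁ ≤ μ₁ ≤ x₂ ≤ b and θ = (x₂-μ₁)/(x₂-x₁). Then the function L(β) = θ F_{α*,β}(x₁) + (1-θ) F_{α*,β}(x₂), where F_{α,β}(x) = log((1+α(x-μ₀))/(1+β(x-μ₀))), is non-increasing in β on [1/(μ₀-b), 0], for any μ₁ ∈ [μ₀, b]. -/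
open Set

/-!
Write `dᵢ(β) = 1 + β (xᵢ - μ₀)`. Up to constants, `-L(β)` is
`g(β) = θ log d₁(β) + (1 - θ) log d₂(β)`, and with `θ = (x₂ - μ₁)/(x₂ - x₁)` one computes
`g'(β) = (μ₁ - μ₀ + β (x₁ - μ₀)(x₂ - μ₀)) / (d₁ d₂)`. The numerator is nonnegative on the
interval: if `x₁ < μ₀` both summands are, and otherwise `-β (x₂ - μ₀) ≤ 1` bounds
`-β (x₁ - μ₀)(x₂ - μ₀)` by `x₁ - μ₀ ≤ μ₁ - μ₀`. Concavity of `log` (the tangent bound at `β'`) turns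
`g'(β') ≥ 0` into `g(β) ≤ g(β')` without any differentiability. The extended-real values
`±∞` only occur at a vanishing argument with positive weight, where the comparison is trivial.
-/

section Denominators

variable {μ₀ b β w : ℝ}

lemma sub_neg_of_one_div_le_of_neg (hβ : 1 / (μ₀ - b) ≤ β) (hβ0 : β < 0) : μ₀ - b < 0 := by
  by_contra! h
  exact hβ0.not_ge (le_trans (one_div_nonneg.2 h) hβ)

lemma one_add_mul_pos_of_lt (hβ : β ∈ Icc (1 / (μ₀ - b)) 0) (hw : w < b - μ₀) :
    0 < 1 + β * w := by
  rcases hβ.2.eq_or_lt with rfl | hβ0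
  · simp
  have hb := sub_neg_of_one_div_le_of_neg hβ.1 hβ0
  have := (div_le_iff_of_neg hb).1 hβ.1
  nlinarith [mul_lt_mul_of_neg_left hw hβ0]

lemma one_add_mul_pos_of_mem_Ioc (hβ : β ∈ Ioc (1 / (μ₀ - b)) 0) (hw : w ≤ b - μ₀) :
    0 < 1 + β * w := by
  rcases hβ.2.eq_or_lt with rfl | hβ0
  · simp
  have hb := sub_neg_of_one_div_le_of_neg hβ.1.le hβ0
  have := (div_lt_iff_of_neg hb).1 hβ.1
  nlinarith [mul_le_mul_of_nonpos_left hw hβ0.le]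

end Denominators

section LogE

variable {θ c d : ℝ}

lemma logE_of_pos (hc : 0 < c) : logE c = ((Real.log c : ℝ) : EReal) :=
  if_neg hc.not_ge

lemma logE_of_nonpos (hc : c ≤ 0) : logE c = ⊥ :=
  if_pos hc

lemma coe_mul_logE_sub_logE (h : θ = 0 ∨ 0 < c ∧ 0 < d) :
    (θ : EReal) * (logE c - logE d) = ((θ * (Real.log c - Real.log d) : ℝ) : EReal) := by
  rcases h with rfl | ⟨hc, hd⟩
  · simp
  · rw [logE_of_pos hc, logE_of_pos hd]
    rfl

lemma coe_mul_logE_sub_logE_eq_bot (hθ : 0 < θ) (hc : c ≤ 0) (hd : 0 < d) :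
    (θ : EReal) * (logE c - logE d) = ⊥ := by
  rw [logE_of_nonpos hc, logE_of_pos hd, EReal.bot_sub, EReal.coe_mul_bot_of_pos hθ]

lemma coe_mul_logE_sub_logE_eq_top (hθ : 0 < θ) (hc : 0 < c) (hd : d ≤ 0) :
    (θ : EReal) * (logE c - logE d) = ⊤ := by
  rw [logE_of_pos hc, logE_of_nonpos hd, EReal.coe_sub_bot, EReal.coe_mul_top_of_pos hθ]

end LogE

lemma Real.log_le_log_add_div {x y : ℝ} (hx : 0 < x) (hy : 0 < y) :
    Real.log x ≤ Real.log y + (x - y) / y := by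
  have h := Real.log_le_sub_one_of_pos (div_pos hx hy)
  rw [Real.log_div hx.ne' hy.ne'] at h
  have e : x / y - 1 = (x - y) / y := by field_simp
  linarith

lemma mul_log_one_add_mul_le {w u β β' : ℝ} (hw : 0 ≤ w) (hd : w = 0 ∨ 0 < 1 + β * u)
    (hd' : 0 < 1 + β' * u) :
    w * Real.log (1 + β * u) ≤
      w * Real.log (1 + β' * u) + (β - β') * (w * u / (1 + β' * u)) := by
  rcases hd with rfl | hd
  · simp
  calc w * Real.log (1 + β * u)
      ≤ w * (Real.log (1 + β' * u) + (1 + β * u - (1 + β' * u)) / (1 + β' * u)) :=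
        mul_le_mul_of_nonneg_left (Real.log_le_log_add_div hd hd') hw
    _ = _ := by ring

lemma weighted_log_one_add_mul_le {w₁ w₂ u₁ u₂ β β' : ℝ} (hw₁ : 0 ≤ w₁) (hw₂ : 0 ≤ w₂)
    (hd₁ : w₁ = 0 ∨ 0 < 1 + β * u₁) (hd₂ : w₂ = 0 ∨ 0 < 1 + β * u₂)
    (hd₁' : 0 < 1 + β' * u₁) (hd₂' : 0 < 1 + β' * u₂) (hle : β ≤ β')
    (hslope : 0 ≤ w₁ * u₁ / (1 + β' * u₁) + w₂ * u₂ / (1 + β' * u₂)) :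
    w₁ * Real.log (1 + β * u₁) + w₂ * Real.log (1 + β * u₂) ≤
      w₁ * Real.log (1 + β' * u₁) + w₂ * Real.log (1 + β' * u₂) := by
  have h₁ := mul_log_one_add_mul_le hw₁ hd₁ hd₁'
  have h₂ := mul_log_one_add_mul_le hw₂ hd₂ hd₂'
  have := mul_nonpos_of_nonpos_of_nonneg (sub_nonpos.2 hle) hslope
  linarith

lemma add_mul_mul_nonneg {m u₁ u₂ β : ℝ} (hβ : β ≤ 0) (hd₂ : 0 ≤ 1 + β * u₂)
    (hu₁ : u₁ ≤ m) (hm : 0 ≤ m) (hu₂ : m ≤ u₂) : 0 ≤ m + β * u₁ * u₂ := by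
  rcases le_or_gt 0 u₁ with h | h
  · nlinarith [mul_le_mul_of_nonneg_left hd₂ h]
  · nlinarith [mul_nonneg (mul_nonneg (neg_nonneg.2 hβ) (neg_nonneg.2 h.le)) (hm.trans hu₂)]

lemma slope_eq {μ₀ μ₁ x₁ x₂ β : ℝ} (hx : x₁ ≠ x₂) (hd₁ : 1 + β * (x₁ - μ₀) ≠ 0)
    (hd₂ : 1 + β * (x₂ - μ₀) ≠ 0) :
    (x₂ - μ₁) / (x₂ - x₁) * (x₁ - μ₀) / (1 + β * (x₁ - μ₀)) +
        (1 - (x₂ - μ₁) / (x₂ - x₁)) * (x₂ - μ₀) / (1 + β * (x₂ - μ₀)) =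
      (μ₁ - μ₀ + β * (x₁ - μ₀) * (x₂ - μ₀)) /
        ((1 + β * (x₁ - μ₀)) * (1 + β * (x₂ - μ₀))) := by
  have : x₂ - x₁ ≠ 0 := sub_ne_zero.2 hx.symm
  rw [div_add_div _ _ hd₁ hd₂]
  congr 1
  field_simp
  ring

lemma slope_nonneg {μ₀ μ₁ x₁ x₂ β : ℝ} (hμ : μ₀ ≤ μ₁) (hx₁ : x₁ ≤ μ₁) (hx₂ : μ₁ ≤ x₂)
    (hx : x₁ < x₂) (hβ : β ≤ 0) (hd₁ : 0 < 1 + β * (x₁ - μ₀)) (hd₂ : 0 < 1 + β * (x₂ - μ₀)) :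
    0 ≤ (x₂ - μ₁) / (x₂ - x₁) * (x₁ - μ₀) / (1 + β * (x₁ - μ₀)) +
        (1 - (x₂ - μ₁) / (x₂ - x₁)) * (x₂ - μ₀) / (1 + β * (x₂ - μ₀)) := by
  rw [slope_eq hx.ne hd₁.ne' hd₂.ne']
  exact div_nonneg (add_mul_mul_nonneg hβ hd₂.le (by linarith) (by linarith) (by linarith))
    (by positivity)

theorem stmt14_general (b μ₀ μ₁ αs x₁ x₂ : ℝ) (h2 : μ₀ ≤ μ₁) (hαs0 : 0 < αs)
    (hx₁μ : x₁ ≤ μ₁) (hμx₂ : μ₁ ≤ x₂) (hx₂ : x₂ ≤ b) (hx : x₁ < x₂) :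
    AntitoneOn (fun β : ℝ =>
      ((((x₂ - μ₁) / (x₂ - x₁)) : ℝ) : EReal) *
        (logE (1 + αs * (x₁ - μ₀)) - logE (1 + β * (x₁ - μ₀))) +
      (((1 - (x₂ - μ₁) / (x₂ - x₁)) : ℝ) : EReal) *
        (logE (1 + αs * (x₂ - μ₀)) - logE (1 + β * (x₂ - μ₀))))
      (Icc (1 / (μ₀ - b)) 0) := by
  intro β hβ β' hβ' hle
  rcases hle.eq_or_lt with rfl | hlt
  · exact le_rfl
  dsimp only
  set θ := (x₂ - μ₁) / (x₂ - x₁)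
  have hθ0 : 0 ≤ θ := div_nonneg (by linarith) (by linarith)
  have hθ1 : 0 ≤ 1 - θ := sub_nonneg.2 ((div_le_one (by linarith)).2 (by linarith))
  have hd₁ : 0 < 1 + β * (x₁ - μ₀) := one_add_mul_pos_of_lt hβ (by linarith)
  have hd₁' : 0 < 1 + β' * (x₁ - μ₀) := one_add_mul_pos_of_lt hβ' (by linarith)
  have hd₂' : 0 < 1 + β' * (x₂ - μ₀) :=
    one_add_mul_pos_of_mem_Ioc ⟨hβ.1.trans_lt hlt, hβ'.2⟩ (by linarith)
  have hc₂ : 0 < 1 + αs * (x₂ - μ₀) := by nlinarith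
  by_cases hbot : 0 < θ ∧ 1 + αs * (x₁ - μ₀) ≤ 0
  · rw [coe_mul_logE_sub_logE_eq_bot hbot.1 hbot.2 hd₁', EReal.bot_add]
    exact bot_le
  have hc₁ : θ = 0 ∨ 0 < 1 + αs * (x₁ - μ₀) :=
    hθ0.eq_or_lt.imp Eq.symm fun h ↦ lt_of_not_ge (hbot ⟨h, ·⟩)
  by_cases htop : 0 < 1 - θ ∧ 1 + β * (x₂ - μ₀) ≤ 0
  · rw [coe_mul_logE_sub_logE (hc₁.imp_right (⟨·, hd₁⟩)),
      coe_mul_logE_sub_logE_eq_top htop.1 hc₂ htop.2, EReal.coe_add_top]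
    exact le_top
  have hd₂ : 1 - θ = 0 ∨ 0 < 1 + β * (x₂ - μ₀) :=
    hθ1.eq_or_lt.imp Eq.symm fun h ↦ lt_of_not_ge (htop ⟨h, ·⟩)
  rw [coe_mul_logE_sub_logE (hc₁.imp_right (⟨·, hd₁⟩)),
    coe_mul_logE_sub_logE (hc₁.imp_right (⟨·, hd₁'⟩)),
    coe_mul_logE_sub_logE (hd₂.imp_right (⟨hc₂, ·⟩)),
    coe_mul_logE_sub_logE (Or.inr ⟨hc₂, hd₂'⟩)]
  have hg := weighted_log_one_add_mul_le hθ0 hθ1 (hc₁.imp_right fun _ ↦ hd₁) hd₂ hd₁' hd₂'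
    hlt.le (slope_nonneg h2 hx₁μ hμx₂ hx hβ'.2 hd₁' hd₂')
  exact_mod_cast (by linarith : _ ≤ _)

theorem stmt14 (a b μ₀ μ₁ αs x₁ x₂ : ℝ) (h1 : a < μ₀) (h2 : μ₀ ≤ μ₁) (h3 : μ₁ < b)
    (hαs0 : 0 < αs) (hαs1 : αs ≤ 1 / (μ₀ - a))
    (hx₁ : a ≤ x₁) (hx₁μ : x₁ ≤ μ₁) (hμx₂ : μ₁ ≤ x₂) (hx₂ : x₂ ≤ b) (hx : x₁ < x₂) :
    AntitoneOn (fun β : ℝ =>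
      ((((x₂ - μ₁) / (x₂ - x₁)) : ℝ) : EReal) *
        (logE (1 + αs * (x₁ - μ₀)) - logE (1 + β * (x₁ - μ₀))) +
      (((1 - (x₂ - μ₁) / (x₂ - x₁)) : ℝ) : EReal) *
        (logE (1 + αs * (x₂ - μ₀)) - logE (1 + β * (x₂ - μ₀))))
      (Icc (1 / (μ₀ - b)) 0) :=
  stmt14_general b μ₀ μ₁ αs x₁ x₂ h2 hαs0 hx₁μ hμx₂ hx₂ hx
end

section
/- Let μ be a Borel probability measure on [a,b] with mean x ∈ (a,b), no atom at x, and suppose E_μ[f] < f(x) for a Borel measurable f integrable under μ with E_μ[|f|] < ∞. Then there exist y, z ∈ [a,b] with y < x < z such that the two-point probability measure θ on {y,z} with mean x satisfies E_θ[f] ≤ E_μ[f]. -/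
/-!
Put `g = f - E_μ[f]`. For `y < x < z`, the two-point measure on `{y, z}` with mean `x` gives
`(z - y) E_θ[g] = (z - x) g(y) + (x - y) g(z)`. Integrating this over `y < x < z` against `μ ⊗ μ`
gives `c (∫_{t<x} g + ∫_{t>x} g)`, where `c = ∫_{t<x} (x - t) dμ = ∫_{t>x} (t - x) dμ` because `μ`
has mean `x`. This vanishes since `μ {x} = 0` and `∫ g dμ = 0`. Both half-lines carry positive
mass (otherwise `μ` would be the Dirac mass at `x`), so the integrand cannot be positive almost
everywhere, and this produces the pair `y, z`.
-/

open MeasureTheory Set Filter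

namespace MeasureTheory

theorem integral_pos_of_ae_pos {α : Type*} [MeasurableSpace α] {μ : Measure α} {f : α → ℝ}
    (hμ : μ ≠ 0) (hfi : Integrable f μ) (hf : ∀ᵐ t ∂μ, 0 < f t) : 0 < ∫ t, f t ∂μ := by
  rw [integral_pos_iff_support_of_nonneg_ae (hf.mono fun _ h => h.le) hfi,
    measure_congr (ae_eq_univ.2 (hf.mono fun _ h => h.ne') : Function.support f =ᵐ[μ] univ)]
  exact Measure.measure_univ_pos.2 hμ

theorem measure_neg_pos_of_integral_eq_zero {α : Type*} [MeasurableSpace α] {μ : Measure α}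
    {g : α → ℝ} (hg : Integrable g μ) (h0 : ∫ t, g t ∂μ = 0) (hne : ¬ g =ᵐ[μ] 0) :
    0 < μ {t | g t < 0} := by
  refine pos_iff_ne_zero.2 fun hneg => hne ?_
  have hnonneg : 0 ≤ᵐ[μ] g := by
    simpa [EventuallyLE, ae_iff] using hneg
  exact (integral_eq_zero_iff_of_nonneg_ae hnonneg hg).1 h0

end MeasureTheory

section Line

variable {μ : Measure ℝ} {x : ℝ}

theorem setIntegral_Iio_add_setIntegral_Ioi (hatom : μ {x} = 0) {g : ℝ → ℝ}
    (hg : Integrable g μ) :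
    ∫ t in Iio x, g t ∂μ + ∫ t in Ioi x, g t ∂μ = ∫ t, g t ∂μ := by
  rw [setIntegral_congr_set (Ioi_ae_eq_Ici' hatom), ← compl_Iio,
    integral_add_compl measurableSet_Iio hg]

variable [IsFiniteMeasure μ]

theorem measure_Iio_pos_and_measure_Ioi_pos (hμ : μ ≠ 0) (hatom : μ {x} = 0)
    (hid : Integrable (fun t => t) μ) (hmean : ∫ t, (t - x) ∂μ = 0) :
    0 < μ (Iio x) ∧ 0 < μ (Ioi x) := by
  have hne : ¬ (fun t => t - x) =ᵐ[μ] 0 := fun h => hμ <| by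
    rw [← Measure.measure_univ_eq_zero, ← union_compl_self {x}]
    refine measure_union_null hatom (measure_mono_null (fun t ht => ?_) (ae_iff.1 h))
    simpa [sub_eq_zero] using ht
  have hne' : ¬ (fun t => x - t) =ᵐ[μ] 0 := fun h =>
    hne (h.mono fun t ht => by simpa [sub_eq_zero, eq_comm] using ht)
  have hmean' : ∫ t, (x - t) ∂μ = 0 := by
    simp_rw [← neg_sub _ x, integral_neg, hmean, neg_zero]
  constructor
  · simpa only [sub_neg, Iio_def] using
      measure_neg_pos_of_integral_eq_zero (hid.sub' (integrable_const x)) hmean hne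
  · simpa only [sub_neg, Ioi_def] using
      measure_neg_pos_of_integral_eq_zero ((integrable_const x).sub' hid) hmean' hne'

variable {g : ℝ → ℝ}

theorem setIntegral_Iio_twoPoint_eq (z : ℝ) (hid : Integrable (fun t => t) μ)
    (hg : Integrable g μ) :
    ∫ y in Iio x, ((z - x) * g y + (x - y) * g z) ∂μ =
      (z - x) * ∫ y in Iio x, g y ∂μ + (∫ y in Iio x, (x - y) ∂μ) * g z := by
  rw [integral_add (hg.integrableOn.const_mul _)
    (((integrable_const x).sub' hid).integrableOn.mul_const _), integral_const_mul,
    integral_mul_const]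

theorem integral_Ioi_integral_Iio_twoPoint_eq_zero (hatom : μ {x} = 0)
    (hid : Integrable (fun t => t) μ) (hmean : ∫ t, (t - x) ∂μ = 0)
    (hg : Integrable g μ) (hg0 : ∫ t, g t ∂μ = 0) :
    ∫ z in Ioi x, ∫ y in Iio x, ((z - x) * g y + (x - y) * g z) ∂μ ∂μ = 0 := by
  have hc : ∫ z in Ioi x, (z - x) ∂μ = ∫ y in Iio x, (x - y) ∂μ := by
    have := setIntegral_Iio_add_setIntegral_Ioi hatom (hid.sub' (integrable_const x))
    simp_rw [← neg_sub _ x, integral_neg]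
    linarith
  simp_rw [setIntegral_Iio_twoPoint_eq _ hid hg]
  rw [integral_add ((hid.sub' (integrable_const x)).integrableOn.mul_const _)
      (hg.integrableOn.const_mul _), integral_mul_const, integral_const_mul, hc, ← mul_add,
    setIntegral_Iio_add_setIntegral_Ioi hatom hg, hg0, mul_zero]

theorem exists_twoPoint_nonpos {s : Set ℝ} (hs : ∀ᵐ t ∂μ, t ∈ s) (hatom : μ {x} = 0)
    (hid : Integrable (fun t => t) μ) (hmean : ∫ t, (t - x) ∂μ = 0)
    (hg : Integrable g μ) (hg0 : ∫ t, g t ∂μ = 0) (hlow : 0 < μ (Iio x))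
    (hhigh : 0 < μ (Ioi x)) :
    ∃ y ∈ s, ∃ z ∈ s, y < x ∧ x < z ∧ (z - x) * g y + (x - y) * g z ≤ 0 := by
  by_contra! hpos
  have hinner : ∀ z ∈ s, x < z →
      0 < (z - x) * ∫ y in Iio x, g y ∂μ + (∫ y in Iio x, (x - y) ∂μ) * g z := by
    intro z hz hxz
    rw [← setIntegral_Iio_twoPoint_eq z hid hg]
    refine integral_pos_of_ae_pos (by simpa using hlow.ne')
      ((hg.integrableOn.const_mul _).add
        (((integrable_const x).sub' hid).integrableOn.mul_const _)) ?_
    filter_upwards [ae_restrict_mem measurableSet_Iio, ae_restrict_of_ae hs] with y hyx hy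
    exact hpos y hy z hz hyx hxz
  have houter : 0 < ∫ z in Ioi x, ∫ y in Iio x, ((z - x) * g y + (x - y) * g z) ∂μ ∂μ := by
    simp_rw [setIntegral_Iio_twoPoint_eq _ hid hg]
    refine integral_pos_of_ae_pos (by simpa using hhigh.ne')
      (((hid.sub' (integrable_const x)).integrableOn.mul_const _).add
        (hg.integrableOn.const_mul _)) ?_
    filter_upwards [ae_restrict_mem measurableSet_Ioi, ae_restrict_of_ae hs] with z hxz hz
    exact hinner z hz hxz
  rw [integral_Ioi_integral_Iio_twoPoint_eq_zero hatom hid hmean hg hg0] at houter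
  exact houter.false

end Line

theorem stmt19_general (a b x : ℝ)
    (μ : Measure ℝ) (hμ : IsProbabilityMeasure μ) (hsupp : μ (Icc a b)ᶜ = 0)
    (hmean : (∫ t, t ∂μ) = x) (hatom : μ {x} = 0)
    (f : ℝ → ℝ) (hint : Integrable f μ) :
    ∃ y z : ℝ, y ∈ Icc a b ∧ z ∈ Icc a b ∧ y < x ∧ x < z ∧
      ((z - x) / (z - y)) * f y + ((x - y) / (z - y)) * f z ≤ ∫ t, f t ∂μ := by
  set F := ∫ t, f t ∂μ
  have hs : ∀ᵐ t ∂μ, t ∈ Icc a b := hsupp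
  have hid : Integrable (fun t => t) μ :=
    Integrable.of_mem_Icc a b measurable_id.aemeasurable hs
  have hmean' : ∫ t, (t - x) ∂μ = 0 := by
    simp [integral_sub hid (integrable_const x), hmean]
  have hF : ∫ t, (f t - F) ∂μ = 0 := by
    simp [integral_sub hint (integrable_const F), F]
  obtain ⟨hlow, hhigh⟩ :=
    measure_Iio_pos_and_measure_Ioi_pos (IsProbabilityMeasure.ne_zero μ) hatom hid hmean'
  obtain ⟨y, hy, z, hz, hyx, hxz, hle⟩ := exists_twoPoint_nonpos hs hatom hid hmean'
    (hint.sub' (integrable_const F)) hF hlow hhigh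
  refine ⟨y, z, hy, hz, hyx, hxz, ?_⟩
  rw [div_mul_eq_mul_div, div_mul_eq_mul_div, ← add_div, div_le_iff₀ (by linarith)]
  linarith

theorem stmt19 (a b x : ℝ) (hab : a < b) (hx : x ∈ Ioo a b)
    (μ : Measure ℝ) (hμ : IsProbabilityMeasure μ) (hsupp : μ (Icc a b)ᶜ = 0)
    (hmean : (∫ t, t ∂μ) = x) (hatom : μ {x} = 0)
    (f : ℝ → ℝ) (hf : Measurable f) (hint : Integrable f μ)
    (hlt : (∫ t, f t ∂μ) < f x) :
    ∃ y z : ℝ, y ∈ Icc a b ∧ z ∈ Icc a b ∧ y < x ∧ x < z ∧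
      ((z - x) / (z - y)) * f y + ((x - y) / (z - y)) * f z ≤ ∫ t, f t ∂μ :=
  stmt19_general a b x μ hμ hsupp hmean hatom f hint
end
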